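/- arXiv:1906.08922 — 3 statements merged into one kernel-verified Lean document; each statement's English description precedes it below -/
import Mathlib

section
/- Let X ∈ ℝ^{m×n} (m ≤ n) have rank r with singular value decomposition X = U [Diag(σ(X)) 0] Vᵀ, and let U₁, V₁ consist of the first r columns of U, V and U₂, V₂ of the remaining columns. Then the convex subdifferential of the nuclear norm at X equals { U₁V₁ᵀ + U₂ Z V₂ᵀ : Z ∈ ℝ^{(m−r)×(n−r)}, ‖Z‖ ≤ 1 }. -/
open Matrix
open scoped BigOperators

/-- Singular values of X: square roots of the eigenvalues of X Xᵀ. -/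
noncomputable def sval {m n : ℕ} (X : Matrix (Fin m) (Fin n) ℝ) : Fin m → ℝ :=
  fun i => Real.sqrt ((Matrix.isHermitian_mul_conjTranspose_self X).eigenvalues i)

/-- Nuclear norm: sum of singular values. -/
noncomputable def nuclearNorm {m n : ℕ} (X : Matrix (Fin m) (Fin n) ℝ) : ℝ :=
  ∑ i, sval X i

/-- Spectral norm: largest singular value. -/
noncomputable def specNorm {m n : ℕ} (X : Matrix (Fin m) (Fin n) ℝ) : ℝ :=
  ⨆ i, sval X i

/-- Trace inner product ⟨A, B⟩ = tr(Aᵀ B). -/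
noncomputable def minp {m n : ℕ} (A B : Matrix (Fin m) (Fin n) ℝ) : ℝ :=
  (Aᵀ * B).trace

open Polynomial


namespace NucAux

variable {k m n : ℕ}

lemma charpoly_conj (P A : Matrix (Fin k) (Fin k) ℝ) (h1 : P * Pᵀ = 1) :
    (P * A * Pᵀ).charpoly = A.charpoly := by
  have key : charmatrix (P * A * Pᵀ) =
      (C : ℝ →+* ℝ[X]).mapMatrix P * charmatrix A * (C : ℝ →+* ℝ[X]).mapMatrix Pᵀ := by
    simp only [charmatrix, mul_sub, sub_mul, _root_.map_mul]
    congr 1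
    rw [← (Matrix.scalar_commute (X : ℝ[X]) (fun r => Commute.all _ _)
      ((C : ℝ →+* ℝ[X]).mapMatrix P)).eq, mul_assoc, ← _root_.map_mul, h1, _root_.map_one, mul_one]
  have hdet : ((C : ℝ →+* ℝ[X]).mapMatrix P).det * ((C : ℝ →+* ℝ[X]).mapMatrix Pᵀ).det = 1 := by
    rw [← det_mul, ← _root_.map_mul, h1, _root_.map_one, det_one]
  rw [Matrix.charpoly, Matrix.charpoly, key, det_mul, det_mul]
  ring_nf
  rw [mul_comm, ← mul_assoc, mul_comm (((C : ℝ →+* ℝ[X]).mapMatrix Pᵀ).det), hdet, one_mul]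

lemma charpoly_diagonal (d : Fin k → ℝ) :
    (Matrix.diagonal d).charpoly
      = (Multiset.map (fun x => X - C x) (Finset.univ.val.map d)).prod := by
  rw [Matrix.charpoly_of_upperTriangular _ (Matrix.blockTriangular_diagonal d)]
  rw [Finset.prod_eq_multiset_prod, Multiset.map_map]
  simp

/-- eigenvalue multiset -/
noncomputable def eigm {A : Matrix (Fin k) (Fin k) ℝ} (hA : A.IsHermitian) : Multiset ℝ :=
  Finset.univ.val.map hA.eigenvalues

lemma sum_eq_eigm {A : Matrix (Fin k) (Fin k) ℝ} (hA : A.IsHermitian) (f : ℝ → ℝ) :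
    ∑ i, f (hA.eigenvalues i) = ((eigm hA).map f).sum := by
  rw [eigm, Multiset.map_map, Finset.sum_eq_multiset_sum]
  rfl

lemma specP_orth1 {A : Matrix (Fin k) (Fin k) ℝ} (hA : A.IsHermitian) :
    (hA.eigenvectorUnitary : Matrix (Fin k) (Fin k) ℝ) *
      (hA.eigenvectorUnitary : Matrix (Fin k) (Fin k) ℝ)ᵀ = 1 := by
  have := Matrix.mem_unitaryGroup_iff.mp (hA.eigenvectorUnitary).2
  rwa [Matrix.star_eq_conjTranspose, conjTranspose_eq_transpose_of_trivial] at this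

lemma specP_orth2 {A : Matrix (Fin k) (Fin k) ℝ} (hA : A.IsHermitian) :
    (hA.eigenvectorUnitary : Matrix (Fin k) (Fin k) ℝ)ᵀ *
      (hA.eigenvectorUnitary : Matrix (Fin k) (Fin k) ℝ) = 1 := by
  have := Matrix.mem_unitaryGroup_iff'.mp (hA.eigenvectorUnitary).2
  rwa [Matrix.star_eq_conjTranspose, conjTranspose_eq_transpose_of_trivial] at this

lemma spectral_real {A : Matrix (Fin k) (Fin k) ℝ} (hA : A.IsHermitian) :
    A = (hA.eigenvectorUnitary : Matrix (Fin k) (Fin k) ℝ) * Matrix.diagonal hA.eigenvalues *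
        (hA.eigenvectorUnitary : Matrix (Fin k) (Fin k) ℝ)ᵀ := by
  conv_lhs => rw [hA.spectral_theorem]
  rw [Unitary.conjStarAlgAut_apply, Matrix.star_eq_conjTranspose,
    conjTranspose_eq_transpose_of_trivial]
  congr 1

lemma eigm_charpoly {A : Matrix (Fin k) (Fin k) ℝ} (hA : A.IsHermitian) :
    A.charpoly = ((eigm hA).map fun x => X - C x).prod := by
  conv_lhs => rw [spectral_real hA]
  rw [charpoly_conj _ _ (specP_orth1 hA), charpoly_diagonal]
  rfl

lemma eigm_unique {A : Matrix (Fin k) (Fin k) ℝ} (hA : A.IsHermitian) (s : Multiset ℝ)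
    (h : A.charpoly = (s.map fun x => X - C x).prod) : eigm hA = s := by
  have h2 := (eigm_charpoly hA).symm.trans h
  have := congrArg Polynomial.roots h2
  rwa [Polynomial.roots_multiset_prod_X_sub_C, Polynomial.roots_multiset_prod_X_sub_C] at this

lemma eigm_diagonal (d : Fin k → ℝ) (h : (Matrix.diagonal d).IsHermitian) :
    eigm h = Finset.univ.val.map d :=
  eigm_unique h _ (charpoly_diagonal d)

lemma eigm_conj {A : Matrix (Fin k) (Fin k) ℝ} (P : Matrix (Fin k) (Fin k) ℝ)
    (h1 : P * Pᵀ = 1) (hA : A.IsHermitian) (hB : (P * A * Pᵀ).IsHermitian) :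
    eigm hB = eigm hA :=
  eigm_unique hB _ (by rw [charpoly_conj _ _ h1]; exact eigm_charpoly hA)

lemma trace_eq_eigm {A : Matrix (Fin k) (Fin k) ℝ} (hA : A.IsHermitian) :
    A.trace = (eigm hA).sum := by
  conv_lhs => rw [spectral_real hA]
  rw [Matrix.trace_mul_cycle, specP_orth2 hA, one_mul, Matrix.trace_diagonal]
  rw [eigm, Finset.sum_eq_multiset_sum]


lemma dot_transpose (M : Matrix (Fin m) (Fin n) ℝ) (u : Fin m → ℝ) (x : Fin n → ℝ) :
    u ⬝ᵥ (M *ᵥ x) = (Mᵀ *ᵥ u) ⬝ᵥ x := by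
  rw [dotProduct_mulVec, Matrix.mulVec_transpose]

lemma dot_self_transform (M : Matrix (Fin m) (Fin n) ℝ) (u : Fin m → ℝ) :
    (Mᵀ *ᵥ u) ⬝ᵥ (Mᵀ *ᵥ u) = u ⬝ᵥ ((M * Mᵀ) *ᵥ u) := by
  rw [← dot_transpose, ← Matrix.mulVec_mulVec]

lemma dot_self_nonneg (u : Fin m → ℝ) : 0 ≤ u ⬝ᵥ u :=
  Finset.sum_nonneg fun i _ => mul_self_nonneg (u i)

lemma dot_sq_le (x y : Fin m → ℝ) : (x ⬝ᵥ y) ^ 2 ≤ (x ⬝ᵥ x) * (y ⬝ᵥ y) := by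
  have := Finset.sum_mul_sq_le_sq_mul_sq Finset.univ x y
  simpa [dotProduct, pow_two, Finset.mul_sum] using this

lemma dot_le_sqrt (x y : Fin m → ℝ) {a b : ℝ} (ha : 0 ≤ a) (hb : 0 ≤ b)
    (hx : x ⬝ᵥ x ≤ a ^ 2) (hy : y ⬝ᵥ y ≤ b ^ 2) : x ⬝ᵥ y ≤ a * b := by
  have h1 : (x ⬝ᵥ y) ^ 2 ≤ (a * b) ^ 2 := by
    calc (x ⬝ᵥ y)^2 ≤ (x ⬝ᵥ x) * (y ⬝ᵥ y) := dot_sq_le x y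
    _ ≤ a^2 * b^2 := mul_le_mul hx hy (dot_self_nonneg y) (sq_nonneg a)
    _ = (a*b)^2 := by ring
  calc x ⬝ᵥ y ≤ |x ⬝ᵥ y| := le_abs_self _
  _ = Real.sqrt ((x ⬝ᵥ y)^2) := (Real.sqrt_sq_eq_abs _).symm
  _ ≤ Real.sqrt ((a*b)^2) := Real.sqrt_le_sqrt h1
  _ = a * b := by rw [Real.sqrt_sq (mul_nonneg ha hb)]



lemma dot_eigenvectorBasis {A : Matrix (Fin k) (Fin k) ℝ} (hA : A.IsHermitian) (i j : Fin k) :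
    ⇑(hA.eigenvectorBasis i) ⬝ᵥ ⇑(hA.eigenvectorBasis j) = if i = j then 1 else 0 := by
  have h := orthonormal_iff_ite.mp hA.eigenvectorBasis.orthonormal i j
  simpa [PiLp.inner_apply, RCLike.inner_apply, dotProduct, starRingEnd_apply, mul_comm] using h

lemma dot_self_eigenvectorBasis {A : Matrix (Fin k) (Fin k) ℝ} (hA : A.IsHermitian) (i : Fin k) :
    ⇑(hA.eigenvectorBasis i) ⬝ᵥ ⇑(hA.eigenvectorBasis i) = 1 := by
  simp [dot_eigenvectorBasis hA i i]

lemma eig_eq_dot {A : Matrix (Fin k) (Fin k) ℝ} (hA : A.IsHermitian) (i : Fin k) :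
    ⇑(hA.eigenvectorBasis i) ⬝ᵥ (A *ᵥ ⇑(hA.eigenvectorBasis i)) = hA.eigenvalues i := by
  rw [hA.mulVec_eigenvectorBasis, dotProduct_smul, smul_eq_mul,
    dot_self_eigenvectorBasis hA i, mul_one]

lemma eigenvectorBasis_complete {A : Matrix (Fin k) (Fin k) ℝ} (hA : A.IsHermitian) (a b : Fin k) :
    ∑ i, (hA.eigenvectorBasis i) a * (hA.eigenvectorBasis i) b = if a = b then 1 else 0 := by
  have h := congrArg (fun M => M a b) (specP_orth1 hA)
  simp only [Matrix.mul_apply, Matrix.transpose_apply, Matrix.one_apply] at h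
  simpa using h

lemma trace_eq_sum_basis {A : Matrix (Fin k) (Fin k) ℝ} (hA : A.IsHermitian)
    (M : Matrix (Fin k) (Fin k) ℝ) :
    M.trace = ∑ i, ⇑(hA.eigenvectorBasis i) ⬝ᵥ (M *ᵥ ⇑(hA.eigenvectorBasis i)) := by
  have : ∀ i, ⇑(hA.eigenvectorBasis i) ⬝ᵥ (M *ᵥ ⇑(hA.eigenvectorBasis i))
      = ∑ a, ∑ b, M a b * ((hA.eigenvectorBasis i) a * (hA.eigenvectorBasis i) b) := by
    intro i
    simp only [dotProduct, Matrix.mulVec, dotProduct, Finset.mul_sum]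
    exact Finset.sum_congr rfl fun a _ => Finset.sum_congr rfl fun b _ => by ring
  rw [Finset.sum_congr rfl fun i _ => this i, Finset.sum_comm]
  rw [Matrix.trace]
  apply Finset.sum_congr rfl
  intro a _
  rw [Finset.sum_comm]
  have : ∀ b, ∑ i, M a b * ((hA.eigenvectorBasis i) a * (hA.eigenvectorBasis i) b)
      = M a b * (if a = b then 1 else 0) := by
    intro b
    rw [← Finset.mul_sum, eigenvectorBasis_complete hA a b]
  rw [Finset.sum_congr rfl fun b _ => this b]
  simp [Matrix.diag]

lemma rayleigh_le {A : Matrix (Fin k) (Fin k) ℝ} (hA : A.IsHermitian) {c : ℝ}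
    (hc : ∀ i, hA.eigenvalues i ≤ c) (u : Fin k → ℝ) :
    u ⬝ᵥ (A *ᵥ u) ≤ c * (u ⬝ᵥ u) := by
  set P := (hA.eigenvectorUnitary : Matrix (Fin k) (Fin k) ℝ) with hP
  set w := Pᵀ *ᵥ u with hw
  have huu : w ⬝ᵥ w = u ⬝ᵥ u := by
    rw [hw, dot_self_transform, specP_orth1 hA, Matrix.one_mulVec]
  have h1 : u ⬝ᵥ (A *ᵥ u) = w ⬝ᵥ (Matrix.diagonal hA.eigenvalues *ᵥ w) := by
    conv_lhs => rw [spectral_real hA, ← hP, Matrix.mul_assoc, ← Matrix.mulVec_mulVec,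
      dot_transpose, ← Matrix.mulVec_mulVec]
  rw [h1, ← huu]
  have h2 : w ⬝ᵥ (Matrix.diagonal hA.eigenvalues *ᵥ w) = ∑ i, hA.eigenvalues i * (w i)^2 := by
    simp only [dotProduct, Matrix.mulVec_diagonal]
    exact Finset.sum_congr rfl fun i _ => by ring
  rw [h2, dotProduct, Finset.mul_sum]
  apply Finset.sum_le_sum
  intro i _
  have : c * (w i * w i) = c * (w i)^2 := by ring
  rw [this]
  exact mul_le_mul_of_nonneg_right (hc i) (sq_nonneg _)



lemma eigYY_nonneg (X : Matrix (Fin m) (Fin n) ℝ) (i : Fin m) :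
    0 ≤ (Matrix.isHermitian_mul_conjTranspose_self X).eigenvalues i :=
  (Matrix.posSemidef_self_mul_conjTranspose X).eigenvalues_nonneg i

lemma sval_nonneg (X : Matrix (Fin m) (Fin n) ℝ) (i : Fin m) : 0 ≤ sval X i :=
  Real.sqrt_nonneg _

lemma sq_sval (X : Matrix (Fin m) (Fin n) ℝ) (i : Fin m) :
    sval X i ^ 2 = (Matrix.isHermitian_mul_conjTranspose_self X).eigenvalues i :=
  Real.sq_sqrt (eigYY_nonneg X i)

lemma specNorm_nonneg (X : Matrix (Fin m) (Fin n) ℝ) : 0 ≤ specNorm X :=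
  Real.iSup_nonneg (sval_nonneg X)

lemma sval_le_specNorm (X : Matrix (Fin m) (Fin n) ℝ) (i : Fin m) : sval X i ≤ specNorm X :=
  le_ciSup (Set.Finite.bddAbove (Set.finite_range _)) i

lemma specNorm_le (X : Matrix (Fin m) (Fin n) ℝ) {c : ℝ} (h : ∀ i, sval X i ≤ c) (hc : 0 ≤ c) :
    specNorm X ≤ c :=
  Real.iSup_le h hc

lemma mul_transpose_eq_mul_conjTranspose (X : Matrix (Fin m) (Fin n) ℝ) :
    X * Xᵀ = X * Xᴴ := by rw [Matrix.conjTranspose_eq_transpose_of_trivial]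

/-- Operator bound for the transpose action. -/
lemma opT (X : Matrix (Fin m) (Fin n) ℝ) (u : Fin m → ℝ) :
    (Xᵀ *ᵥ u) ⬝ᵥ (Xᵀ *ᵥ u) ≤ specNorm X ^ 2 * (u ⬝ᵥ u) := by
  rw [dot_self_transform, mul_transpose_eq_mul_conjTranspose]
  refine rayleigh_le (Matrix.isHermitian_mul_conjTranspose_self X) (fun i => ?_) u
  rw [← sq_sval]
  exact pow_le_pow_left₀ (sval_nonneg X i) (sval_le_specNorm X i) 2

/-- Operator bound for the forward action. -/
lemma opF (X : Matrix (Fin m) (Fin n) ℝ) (v : Fin n → ℝ) :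
    (X *ᵥ v) ⬝ᵥ (X *ᵥ v) ≤ specNorm X ^ 2 * (v ⬝ᵥ v) := by
  set w := X *ᵥ v with hw
  set a := w ⬝ᵥ w with ha
  have ha0 : 0 ≤ a := dot_self_nonneg w
  have hRHS : 0 ≤ specNorm X ^ 2 * (v ⬝ᵥ v) := mul_nonneg (sq_nonneg _) (dot_self_nonneg v)
  rcases eq_or_lt_of_le ha0 with h0 | h0
  · exact h0 ▸ hRHS
  · have key : a * a ≤ (specNorm X ^ 2 * (v ⬝ᵥ v)) * a := by
      have h1 : a = (Xᵀ *ᵥ w) ⬝ᵥ v := by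
        rw [ha, hw]
        conv_lhs => rw [dot_transpose]
      have h2 : ((Xᵀ *ᵥ w) ⬝ᵥ v)^2 ≤ ((Xᵀ *ᵥ w) ⬝ᵥ (Xᵀ *ᵥ w)) * (v ⬝ᵥ v) := dot_sq_le _ _
      have h3 : (Xᵀ *ᵥ w) ⬝ᵥ (Xᵀ *ᵥ w) ≤ specNorm X ^ 2 * a := by
        have := opT X w; rw [← ha] at this; exact this
      calc a * a = ((Xᵀ *ᵥ w) ⬝ᵥ v)^2 := by rw [← h1]; ring
      _ ≤ ((Xᵀ *ᵥ w) ⬝ᵥ (Xᵀ *ᵥ w)) * (v ⬝ᵥ v) := h2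
      _ ≤ (specNorm X ^ 2 * a) * (v ⬝ᵥ v) :=
          mul_le_mul_of_nonneg_right h3 (dot_self_nonneg v)
      _ = (specNorm X ^ 2 * (v ⬝ᵥ v)) * a := by ring
    exact le_of_mul_le_mul_right key h0

/-- von Neumann-type duality bound. -/
lemma minp_le_spec_mul_nuc (W Y : Matrix (Fin m) (Fin n) ℝ) :
    minp W Y ≤ specNorm W * nuclearNorm Y := by
  classical
  set hH := Matrix.isHermitian_mul_conjTranspose_self Y with hhH
  have key : minp W Y
      = ∑ i, (Yᵀ *ᵥ ⇑(hH.eigenvectorBasis i)) ⬝ᵥ (Wᵀ *ᵥ ⇑(hH.eigenvectorBasis i)) := by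
    have h1 : minp W Y = (Y * Wᵀ).trace := by
      rw [minp, Matrix.trace_mul_comm]
    rw [h1, trace_eq_sum_basis hH]
    refine Finset.sum_congr rfl fun i _ => ?_
    rw [← Matrix.mulVec_mulVec, dot_transpose]
  rw [key]
  have hb : ∀ i : Fin m, (Yᵀ *ᵥ ⇑(hH.eigenvectorBasis i)) ⬝ᵥ (Wᵀ *ᵥ ⇑(hH.eigenvectorBasis i))
      ≤ sval Y i * specNorm W := by
    intro i
    apply dot_le_sqrt _ _ (sval_nonneg Y i) (specNorm_nonneg W)
    · rw [dot_self_transform, mul_transpose_eq_mul_conjTranspose, sq_sval]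
      have := eig_eq_dot hH i
      rw [← hhH] at *
      rw [this]
    · have := opT W ⇑(hH.eigenvectorBasis i)
      rwa [dot_self_eigenvectorBasis hH i, mul_one] at this
  calc ∑ i, (Yᵀ *ᵥ ⇑(hH.eigenvectorBasis i)) ⬝ᵥ (Wᵀ *ᵥ ⇑(hH.eigenvectorBasis i))
      ≤ ∑ i, sval Y i * specNorm W := Finset.sum_le_sum fun i _ => hb i
  _ = specNorm W * nuclearNorm Y := by
      rw [nuclearNorm, mul_comm, Finset.sum_mul]



lemma nuclearNorm_eq_eigm (Y : Matrix (Fin m) (Fin n) ℝ) :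
    nuclearNorm Y
      = ((eigm (Matrix.isHermitian_mul_conjTranspose_self Y)).map Real.sqrt).sum := by
  rw [nuclearNorm]
  exact sum_eq_eigm _ _

lemma eigm_congr {A B : Matrix (Fin k) (Fin k) ℝ} (hA : A.IsHermitian) (hB : B.IsHermitian)
    (h : A = B) : eigm hA = eigm hB :=
  eigm_unique hA _ (by rw [h]; exact eigm_charpoly hB)

lemma nuclearNorm_nonneg (Y : Matrix (Fin m) (Fin n) ℝ) : 0 ≤ nuclearNorm Y :=
  Finset.sum_nonneg fun i _ => sval_nonneg Y i

/-- rectangular diagonal matrix -/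
def rdiag (n : ℕ) (d : Fin m → ℝ) : Matrix (Fin m) (Fin n) ℝ :=
  Matrix.of fun i j => if (i : ℕ) = (j : ℕ) then d i else 0

lemma rdiag_mul_conjTranspose (d : Fin m → ℝ) (h0 : ∀ i : Fin m, n ≤ (i : ℕ) → d i = 0) :
    rdiag n d * (rdiag n d)ᴴ = Matrix.diagonal (fun i => d i ^ 2) := by
  ext a b
  rw [Matrix.mul_apply]
  simp only [Matrix.conjTranspose_apply, rdiag, Matrix.of_apply, star_trivial]
  by_cases hab : a = b
  · subst hab
    rw [Matrix.diagonal_apply_eq]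
    by_cases hn : (a : ℕ) < n
    · rw [Finset.sum_eq_single (⟨(a : ℕ), hn⟩ : Fin n)]
      · simp [pow_two]
      · intro j _ hj
        have : (a : ℕ) ≠ (j : ℕ) := fun h => hj (by ext; simp [← h])
        simp [this]
      · intro h; exact absurd (Finset.mem_univ _) h
    · have hd : d a = 0 := h0 a (le_of_not_gt hn)
      rw [hd]
      have : ∀ j : Fin n, (a : ℕ) ≠ (j : ℕ) := by
        intro j h
        exact hn (h ▸ j.isLt)
      simp [this]
  · rw [Matrix.diagonal_apply_ne _ hab]
    apply Finset.sum_eq_zero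
    intro j _
    have : (a : ℕ) ≠ (b : ℕ) ∨ True := Or.inl (fun h => hab (Fin.ext h))
    by_cases h1 : (a : ℕ) = (j : ℕ)
    · have h2 : (b : ℕ) ≠ (j : ℕ) := by
        intro h2
        exact hab (Fin.ext (h1.trans h2.symm))
      simp [h1, h2]
    · simp [h1]

lemma nuclearNorm_rdiag (d : Fin m → ℝ) (h0 : ∀ i : Fin m, n ≤ (i : ℕ) → d i = 0) :
    nuclearNorm (rdiag n d) = ∑ i, |d i| := by
  rw [nuclearNorm_eq_eigm]
  have hD := rdiag_mul_conjTranspose d h0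
  have hB : (Matrix.diagonal (fun i => d i ^ 2)).IsHermitian := Matrix.isHermitian_diagonal _
  rw [eigm_congr (Matrix.isHermitian_mul_conjTranspose_self (rdiag n d)) hB hD,
    eigm_diagonal _ hB, Multiset.map_map]
  rw [show ∑ i, |d i| = (Finset.univ.val.map fun i => |d i|).sum from
    Finset.sum_eq_multiset_sum _ _]
  congr 1
  apply Multiset.map_congr rfl
  intro i _
  simp [Real.sqrt_sq_eq_abs]

lemma nuclearNorm_rankOne (p : Fin m → ℝ) (v : Fin n → ℝ) (hp : p ⬝ᵥ p = 1) (hv : v ⬝ᵥ v = 1) :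
    nuclearNorm (Matrix.of fun i j => p i * v j) = 1 := by
  set Y : Matrix (Fin m) (Fin n) ℝ := Matrix.of fun i j => p i * v j with hYdef
  have hYY : Y * Yᴴ = Matrix.of fun a b => p a * p b := by
    ext a b
    simp only [Matrix.mul_apply, Matrix.conjTranspose_apply, Matrix.of_apply, star_trivial, hYdef]
    have : ∀ j, p a * v j * (p b * v j) = p a * p b * (v j * v j) := fun j => by ring
    rw [Finset.sum_congr rfl fun j _ => this j, ← Finset.mul_sum,
      show ∑ j, v j * v j = v ⬝ᵥ v from rfl, hv, mul_one]
  have hH := Matrix.isHermitian_mul_conjTranspose_self Y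
  have heig : ∀ i, hH.eigenvalues i = 0 ∨ hH.eigenvalues i = 1 := by
    intro i
    set q := ⇑(hH.eigenvectorBasis i) with hq
    have hmv : (Y * Yᴴ) *ᵥ q = hH.eigenvalues i • q := hH.mulVec_eigenvectorBasis i
    have hmv2 : (Y * Yᴴ) *ᵥ q = (p ⬝ᵥ q) • p := by
      rw [hYY]
      funext a
      show ∑ b, (p a * p b) * q b = _
      have : ∀ b, (p a * p b) * q b = p a * (p b * q b) := fun b => by ring
      rw [Finset.sum_congr rfl fun b _ => this b, ← Finset.mul_sum]
      show p a * (p ⬝ᵥ q) = (p ⬝ᵥ q) * p a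
      ring
    have hlam : hH.eigenvalues i = (p ⬝ᵥ q) * (q ⬝ᵥ p) := by
      rw [← eig_eq_dot hH i, ← hq, hmv2, dotProduct_smul, smul_eq_mul]
    have hfix : (p ⬝ᵥ q) * (hH.eigenvalues i) = p ⬝ᵥ q := by
      have e1 : p ⬝ᵥ ((Y * Yᴴ) *ᵥ q) = hH.eigenvalues i * (p ⬝ᵥ q) := by
        rw [hmv, dotProduct_smul, smul_eq_mul]
      have e2 : p ⬝ᵥ ((Y * Yᴴ) *ᵥ q) = (p ⬝ᵥ q) * (p ⬝ᵥ p) := by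
        rw [hmv2, dotProduct_smul, smul_eq_mul]
      rw [e1, hp, mul_one] at e2
      rw [mul_comm] at e2
      exact e2
    by_cases hc : p ⬝ᵥ q = 0
    · left
      rw [hlam, hc, zero_mul]
    · right
      have := mul_left_cancel₀ hc (hfix.trans (mul_one _).symm)
      exact this
  have hsum : nuclearNorm Y = ∑ i, hH.eigenvalues i := by
    rw [nuclearNorm]
    apply Finset.sum_congr rfl
    intro i _
    show Real.sqrt _ = _
    rcases heig i with h | h <;> rw [h] <;> simp
  rw [hsum]
  have h1 : ∑ i, hH.eigenvalues i = (eigm hH).sum := by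
    have := sum_eq_eigm hH id
    simpa using this
  rw [h1, ← trace_eq_eigm hH, hYY]
  rw [Matrix.trace]
  simp only [Matrix.diag_apply, Matrix.of_apply]
  exact hp

lemma conj_mul_conjT (U : Matrix (Fin m) (Fin m) ℝ) (V : Matrix (Fin n) (Fin n) ℝ)
    (A : Matrix (Fin m) (Fin n) ℝ) (hV : Vᵀ * V = 1) :
    (U * A * Vᵀ) * (U * A * Vᵀ)ᴴ = U * (A * Aᴴ) * Uᵀ := by
  rw [Matrix.conjTranspose_eq_transpose_of_trivial, Matrix.conjTranspose_eq_transpose_of_trivial]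
  simp only [Matrix.transpose_mul, Matrix.transpose_transpose, Matrix.mul_assoc]
  rw [← Matrix.mul_assoc Vᵀ V, hV, Matrix.one_mul]

lemma nuclearNorm_conj (U : Matrix (Fin m) (Fin m) ℝ) (V : Matrix (Fin n) (Fin n) ℝ)
    (A : Matrix (Fin m) (Fin n) ℝ) (hU2 : U * Uᵀ = 1) (hV : Vᵀ * V = 1) :
    nuclearNorm (U * A * Vᵀ) = nuclearNorm A := by
  rw [nuclearNorm_eq_eigm, nuclearNorm_eq_eigm]
  congr 1
  have hcc := conj_mul_conjT U V A hV
  have hB : (U * (A * Aᴴ) * Uᵀ).IsHermitian :=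
    hcc ▸ Matrix.isHermitian_mul_conjTranspose_self (U * A * Vᵀ)
  rw [eigm_congr (Matrix.isHermitian_mul_conjTranspose_self (U * A * Vᵀ)) hB hcc,
    eigm_conj U hU2 (Matrix.isHermitian_mul_conjTranspose_self A) hB]

lemma minp_conj (U : Matrix (Fin m) (Fin m) ℝ) (V : Matrix (Fin n) (Fin n) ℝ)
    (A B : Matrix (Fin m) (Fin n) ℝ) (hU : Uᵀ * U = 1) (hV : Vᵀ * V = 1) :
    minp (U * A * Vᵀ) (U * B * Vᵀ) = minp A B := by
  rw [minp, minp]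
  simp only [Matrix.transpose_mul, Matrix.transpose_transpose]
  simp only [← Matrix.mul_assoc]
  rw [Matrix.mul_assoc (V * Aᵀ) Uᵀ U, hU, Matrix.mul_one]
  rw [Matrix.trace_mul_comm]
  simp only [← Matrix.mul_assoc]
  rw [hV, Matrix.one_mul]

lemma minp_sub (W Y Z : Matrix (Fin m) (Fin n) ℝ) : minp W (Y - Z) = minp W Y - minp W Z := by
  rw [minp, minp, minp, Matrix.mul_sub, Matrix.trace_sub]

lemma minp_smul (W E : Matrix (Fin m) (Fin n) ℝ) (t : ℝ) : minp W (t • E) = t * minp W E := by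
  rw [minp, minp, Matrix.mul_smul, Matrix.trace_smul, smul_eq_mul]

lemma minp_entries (A B : Matrix (Fin m) (Fin n) ℝ) :
    minp A B = ∑ i, ∑ j, A i j * B i j := by
  rw [minp, Matrix.trace]
  simp only [Matrix.diag_apply, Matrix.mul_apply, Matrix.transpose_apply]
  exact Finset.sum_comm



lemma specNorm_le_of_opT (X : Matrix (Fin m) (Fin n) ℝ) {c : ℝ} (hc : 0 ≤ c)
    (h : ∀ u : Fin m → ℝ, (Xᵀ *ᵥ u) ⬝ᵥ (Xᵀ *ᵥ u) ≤ c ^ 2 * (u ⬝ᵥ u)) : specNorm X ≤ c := by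
  apply specNorm_le X _ hc
  intro i
  have hH := Matrix.isHermitian_mul_conjTranspose_self X
  set q := ⇑(hH.eigenvectorBasis i) with hq
  have h1 : (Xᵀ *ᵥ q) ⬝ᵥ (Xᵀ *ᵥ q) = hH.eigenvalues i := by
    rw [dot_self_transform, mul_transpose_eq_mul_conjTranspose]
    exact eig_eq_dot hH i
  have h2 := h q
  rw [h1, dot_self_eigenvectorBasis hH i, mul_one] at h2
  calc sval X i = Real.sqrt (hH.eigenvalues i) := rfl
  _ ≤ Real.sqrt (c ^ 2) := Real.sqrt_le_sqrt h2
  _ = c := Real.sqrt_sq hc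



/-- the rank-r partial identity -/
def Jmat (m n r : ℕ) : Matrix (Fin m) (Fin n) ℝ :=
  Matrix.of fun (i : Fin m) (j : Fin n) => if (i : ℕ) = (j : ℕ) ∧ (i : ℕ) < r then (1:ℝ) else 0

lemma Jmat_eq_rdiag {m n r : ℕ} :
    Jmat m n r = rdiag n (fun i : Fin m => if (i : ℕ) < r then (1:ℝ) else 0) := by
  ext i j
  simp only [Jmat, rdiag, Matrix.of_apply]
  split_ifs <;> first | rfl | tauto

/-- mask of a vector on indices `≥ r` -/
def maskGe {m : ℕ} (r : ℕ) (u : Fin m → ℝ) : Fin m → ℝ := fun i => if r ≤ (i : ℕ) then u i else 0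

/-- mask of a vector on indices `< r` -/
def maskLt {m : ℕ} (r : ℕ) (u : Fin m → ℝ) : Fin m → ℝ := fun i => if (i : ℕ) < r then u i else 0

lemma mask_dot_split {m : ℕ} (r : ℕ) (u : Fin m → ℝ) :
    maskLt r u ⬝ᵥ maskLt r u + maskGe r u ⬝ᵥ maskGe r u = u ⬝ᵥ u := by
  simp only [dotProduct, maskLt, maskGe, ← Finset.sum_add_distrib]
  apply Finset.sum_congr rfl
  intro i _
  by_cases h : (i : ℕ) < r
  · simp [h, Nat.not_le.mpr h]
  · simp [h, Nat.le_of_not_lt h]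

lemma maskGe_dot_le {m : ℕ} (r : ℕ) (u : Fin m → ℝ) : maskGe r u ⬝ᵥ maskGe r u ≤ u ⬝ᵥ u := by
  rw [← mask_dot_split r u]
  have : 0 ≤ maskLt r u ⬝ᵥ maskLt r u := dot_self_nonneg _
  linarith

lemma maskLt_dot_le {m : ℕ} (r : ℕ) (u : Fin m → ℝ) : maskLt r u ⬝ᵥ maskLt r u ≤ u ⬝ᵥ u := by
  rw [← mask_dot_split r u]
  have : 0 ≤ maskGe r u ⬝ᵥ maskGe r u := dot_self_nonneg _
  linarith

/-- transpose of Z kills vectors via their mask when rows `< r` vanish -/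
lemma mulVec_maskGe {m n : ℕ} (r : ℕ) (Z : Matrix (Fin m) (Fin n) ℝ)
    (hZ : ∀ (i : Fin m) (j : Fin n), (i : ℕ) < r → Z i j = 0) (u : Fin m → ℝ) :
    Zᵀ *ᵥ u = Zᵀ *ᵥ maskGe r u := by
  funext j
  simp only [Matrix.mulVec, dotProduct, Matrix.transpose_apply, maskGe]
  apply Finset.sum_congr rfl
  intro i _
  by_cases h : (i : ℕ) < r
  · rw [hZ i j h]; ring
  · rw [if_pos (Nat.le_of_not_lt h)]

lemma JmatT_mulVec {m n r : ℕ} (hrm : r ≤ m) (u : Fin m → ℝ) (j : Fin n) :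
    ((Jmat m n r)ᵀ *ᵥ u) j = if h : (j : ℕ) < r then u ⟨(j : ℕ), lt_of_lt_of_le h hrm⟩ else 0 := by
  simp only [Matrix.mulVec, dotProduct, Matrix.transpose_apply, Jmat, Matrix.of_apply]
  by_cases h : (j : ℕ) < r
  · rw [dif_pos h]
    rw [Finset.sum_eq_single (⟨(j : ℕ), lt_of_lt_of_le h hrm⟩ : Fin m)]
    · simp [h]
    · intro i _ hi
      have : (i : ℕ) ≠ (j : ℕ) := fun hc => hi (by ext; simp [hc])
      simp [this]
    · intro hc; exact absurd (Finset.mem_univ _) hc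
  · rw [dif_neg h]
    apply Finset.sum_eq_zero
    intro i _
    have : ¬((i : ℕ) = (j : ℕ) ∧ (i : ℕ) < r) := by
      rintro ⟨h1, h2⟩; exact h (h1 ▸ h2)
    simp [this]

lemma JmatT_mulVec_maskGe {m n r : ℕ} (hrm : r ≤ m) (u : Fin m → ℝ) :
    (Jmat m n r)ᵀ *ᵥ maskGe r u = (0 : Fin n → ℝ) := by
  funext j
  rw [JmatT_mulVec hrm]
  by_cases h : (j : ℕ) < r
  · rw [dif_pos h]
    show (if r ≤ ((⟨(j : ℕ), lt_of_lt_of_le h hrm⟩ : Fin m) : ℕ) then u _ else 0) = 0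
    rw [if_neg (by simpa using Nat.not_le.mpr h)]
  · rw [dif_neg h]; rfl



lemma minp_zero {m n : ℕ} (W : Matrix (Fin m) (Fin n) ℝ) : minp W 0 = 0 := by
  rw [minp, Matrix.mul_zero, Matrix.trace_zero]

lemma minp_rdiag {m n : ℕ} (W : Matrix (Fin m) (Fin n) ℝ) (d : Fin m → ℝ) :
    minp W (rdiag n d)
      = ∑ i : Fin m, (if h : (i : ℕ) < n then W i ⟨(i : ℕ), h⟩ * d i else 0) := by
  rw [minp_entries]
  apply Finset.sum_congr rfl
  intro i _
  by_cases h : (i : ℕ) < n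
  · rw [dif_pos h]
    rw [Finset.sum_eq_single (⟨(i : ℕ), h⟩ : Fin n)]
    · simp [rdiag]
    · intro j _ hj
      have : (i : ℕ) ≠ (j : ℕ) := fun hc => hj (by ext; simp [← hc])
      simp [rdiag, this]
    · intro hc; exact absurd (Finset.mem_univ _) hc
  · rw [dif_neg h]
    apply Finset.sum_eq_zero
    intro j _
    have : (i : ℕ) ≠ (j : ℕ) := by
      intro hc
      exact h (hc ▸ j.isLt)
    simp [rdiag, this]




lemma dot_add_expand {n : ℕ} (x y : Fin n → ℝ) :
    (x + y) ⬝ᵥ (x + y) = x ⬝ᵥ x + 2 * (x ⬝ᵥ y) + y ⬝ᵥ y := by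
  rw [add_dotProduct, dotProduct_add, dotProduct_add,
    dotProduct_comm y x]
  ring

lemma core {m n r : ℕ} (hrm : r ≤ m) (hrn : r ≤ n) (σ : Fin m → ℝ)
    (hσpos : ∀ i : Fin m, (i : ℕ) < r → 0 < σ i)
    (hσ0 : ∀ i : Fin m, r ≤ (i : ℕ) → σ i = 0)
    (W : Matrix (Fin m) (Fin n) ℝ) :
    (∀ Y, nuclearNorm (rdiag n σ) + minp W (Y - rdiag n σ) ≤ nuclearNorm Y) ↔
      ∃ Z : Matrix (Fin m) (Fin n) ℝ,
        (∀ (i : Fin m) (j : Fin n), ((i : ℕ) < r ∨ (j : ℕ) < r) → Z i j = 0) ∧ specNorm Z ≤ 1 ∧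
        W = Jmat m n r + Z := by
  have hσnn : ∀ i, 0 ≤ σ i := by
    intro i
    by_cases h : (i : ℕ) < r
    · exact (hσpos i h).le
    · exact (hσ0 i (Nat.le_of_not_lt h)).ge
  have hsupp : ∀ i : Fin m, n ≤ (i : ℕ) → σ i = 0 := fun i h => hσ0 i (le_trans hrn h)
  have nucD : nuclearNorm (rdiag n σ) = ∑ i, σ i := by
    rw [nuclearNorm_rdiag σ hsupp]
    exact Finset.sum_congr rfl fun i _ => abs_of_nonneg (hσnn i)
  constructor
  · -- subgradient → structure
    intro h
    -- Step A: pairing with D equals nuclear norm of D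
    have hWD : minp W (rdiag n σ) = ∑ i, σ i := by
      have h0mat : (0 : Matrix (Fin m) (Fin n) ℝ) = rdiag n (fun _ => 0) := by
        ext i j; simp [rdiag]
      have nuc0 : nuclearNorm (0 : Matrix (Fin m) (Fin n) ℝ) = 0 := by
        rw [h0mat, nuclearNorm_rdiag _ (fun i _ => rfl)]
        simp
      have h2D : (2:ℝ) • rdiag n σ = rdiag n (fun i => 2 * σ i) := by
        ext i j; simp [rdiag, mul_ite]
      have nuc2D : nuclearNorm ((2:ℝ) • rdiag n σ) = 2 * ∑ i, σ i := by
        rw [h2D, nuclearNorm_rdiag _ (fun i hi => by rw [hsupp i hi, mul_zero]), Finset.mul_sum]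
        exact Finset.sum_congr rfl fun i _ => abs_of_nonneg (mul_nonneg (by norm_num) (hσnn i))
      have a1 := h 0
      rw [nuc0] at a1
      have a1' : minp W (0 - rdiag n σ) = 0 - minp W (rdiag n σ) := by
        rw [minp_sub, minp_zero]
      rw [a1', nucD] at a1
      have a2 := h ((2:ℝ) • rdiag n σ)
      have h2sub : (2:ℝ) • rdiag n σ - rdiag n σ = rdiag n σ := by
        rw [two_smul]; abel
      rw [h2sub, nuc2D, nucD] at a2
      linarith
    -- Step B: dual feasibility
    have hdual : ∀ Y, minp W Y ≤ nuclearNorm Y := by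
      intro Y
      have := h Y
      rw [minp_sub, hWD, nucD] at this
      linarith
    -- Step C: spectral norm at most 1
    have hspec : specNorm W ≤ 1 := by
      apply specNorm_le _ _ zero_le_one
      intro i
      have hH := Matrix.isHermitian_mul_conjTranspose_self W
      have hev0 : 0 ≤ hH.eigenvalues i := eigYY_nonneg W i
      rcases eq_or_lt_of_le hev0 with hz | hpos
      · show Real.sqrt _ ≤ 1
        rw [← hz]
        simp
      · set q := ⇑(hH.eigenvectorBasis i) with hq
        set s := Real.sqrt (hH.eigenvalues i) with hs
        have hs0 : 0 < s := Real.sqrt_pos.mpr hpos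
        have hss : s * s = hH.eigenvalues i := Real.mul_self_sqrt hev0
        set v := s⁻¹ • (Wᵀ *ᵥ q) with hv
        have hWq : (Wᵀ *ᵥ q) ⬝ᵥ (Wᵀ *ᵥ q) = hH.eigenvalues i := by
          rw [dot_self_transform, mul_transpose_eq_mul_conjTranspose]
          exact eig_eq_dot hH i
        have hvv : v ⬝ᵥ v = 1 := by
          rw [hv, smul_dotProduct, dotProduct_smul, hWq, smul_eq_mul, smul_eq_mul]
          rw [← hss]
          field_simp
        have hqq := dot_self_eigenvectorBasis hH i
        have hmY := hdual (Matrix.of fun a b => q a * v b)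
        rw [nuclearNorm_rankOne q v hqq hvv] at hmY
        have hcomp : minp W (Matrix.of fun a b => q a * v b) = s := by
          rw [minp_entries]
          have e1 : ∀ (a : Fin m) (b : Fin n), W a b * (Matrix.of fun a b => q a * v b) a b
              = (W a b * q a) * v b := by
            intro a b; simp only [Matrix.of_apply]; ring
          calc ∑ a, ∑ b, W a b * (Matrix.of fun a b => q a * v b) a b
              = ∑ b, ∑ a, (W a b * q a) * v b := by
                rw [Finset.sum_comm]
                exact Finset.sum_congr rfl fun b _ => Finset.sum_congr rfl fun a _ => e1 a b
          _ = (Wᵀ *ᵥ q) ⬝ᵥ v := by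
                simp only [dotProduct, Matrix.mulVec, Matrix.transpose_apply,
                  Finset.sum_mul]
          _ = s⁻¹ * (hH.eigenvalues i) := by
                rw [hv, dotProduct_smul, hWq, smul_eq_mul]
          _ = s := by
                rw [← hss]
                field_simp
        rw [hcomp] at hmY
        exact hmY
    -- Step D: diagonal entries equal 1
    have hdiag : ∀ (i0 : Fin m) (hi0 : (i0 : ℕ) < r),
        W i0 ⟨(i0 : ℕ), lt_of_lt_of_le hi0 hrn⟩ = 1 := by
      intro i0 hi0
      have hσ0pos := hσpos i0 hi0
      have key : ∀ c : ℝ, |c| ≤ σ i0 → c * W i0 ⟨(i0 : ℕ), lt_of_lt_of_le hi0 hrn⟩ ≤ c := by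
        intro c hc
        set d : Fin m → ℝ := fun i => σ i + if i = i0 then c else 0 with hd
        have hdnn : ∀ i', 0 ≤ d i' := by
          intro i'
          show 0 ≤ σ i' + if i' = i0 then c else 0
          by_cases hh : i' = i0
          · rw [if_pos hh]
            have := abs_le.mp hc
            have := hσnn i'
            subst hh
            linarith
          · rw [if_neg hh, add_zero]
            exact hσnn i'
        have hdsupp : ∀ i : Fin m, n ≤ (i : ℕ) → d i = 0 := by
          intro i hi
          have hne : i ≠ i0 := by
            intro hc2
            subst hc2
            exact absurd (lt_of_lt_of_le hi0 hrn) (Nat.not_lt.mpr hi)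
          rw [hd]
          simp [hne, hsupp i hi]
        have nucY : nuclearNorm (rdiag n d) = (∑ i, σ i) + c := by
          rw [nuclearNorm_rdiag _ hdsupp]
          rw [Finset.sum_congr rfl fun i _ => abs_of_nonneg (hdnn i), hd]
          rw [Finset.sum_add_distrib, Finset.sum_ite_eq' Finset.univ i0 (fun _ => c)]
          simp
        have hsub : rdiag n d - rdiag n σ = rdiag n (fun i => if i = i0 then c else 0) := by
          ext i j
          simp only [rdiag, Matrix.sub_apply, Matrix.of_apply, hd]
          split_ifs <;> ring
        have hpair : minp W (rdiag n d - rdiag n σ)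
            = W i0 ⟨(i0 : ℕ), lt_of_lt_of_le hi0 hrn⟩ * c := by
          rw [hsub, minp_rdiag]
          rw [Finset.sum_eq_single i0]
          · rw [dif_pos (lt_of_lt_of_le hi0 hrn), if_pos rfl]
          · intro i _ hi
            by_cases hin : (i : ℕ) < n
            · rw [dif_pos hin, if_neg hi, mul_zero]
            · rw [dif_neg hin]
          · intro hc2; exact absurd (Finset.mem_univ _) hc2
        have := h (rdiag n d)
        rw [hpair, nucY, nucD] at this
        linarith [this, mul_comm (W i0 ⟨(i0 : ℕ), lt_of_lt_of_le hi0 hrn⟩) c]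
      have k1 := key (σ i0) (by rw [abs_of_pos hσ0pos])
      have k2 := key (-(σ i0)) (by rw [abs_neg, abs_of_pos hσ0pos])
      have e1 : σ i0 * W i0 ⟨(i0 : ℕ), lt_of_lt_of_le hi0 hrn⟩ = σ i0 * 1 := by
        rw [mul_one]
        nlinarith
      exact mul_left_cancel₀ (ne_of_gt hσ0pos) e1
    -- Step E: rows vanish off the diagonal
    have hrow : ∀ (i0 : Fin m) (hi0 : (i0 : ℕ) < r) (j : Fin n),
        j ≠ ⟨(i0 : ℕ), lt_of_lt_of_le hi0 hrn⟩ → W i0 j = 0 := by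
      intro i0 hi0 j hj
      have hb := opT W (Pi.single i0 1)
      have hsv : (Wᵀ *ᵥ Pi.single i0 1) = fun j => W i0 j := by
        funext j'
        rw [Matrix.mulVec_single]
        simp
      have hdot : (Pi.single i0 1 : Fin m → ℝ) ⬝ᵥ Pi.single i0 1 = 1 := by
        simp [dotProduct, Pi.single_apply]
      rw [hsv, hdot, mul_one] at hb
      have hb2 : (fun j => W i0 j) ⬝ᵥ (fun j => W i0 j) ≤ 1 := by
        have h2 : specNorm W ^ 2 ≤ 1 := by nlinarith [specNorm_nonneg W]
        linarith
      set j0 : Fin n := ⟨(i0 : ℕ), lt_of_lt_of_le hi0 hrn⟩ with hj0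
      have hdd : W i0 j0 = 1 := hdiag i0 hi0
      have hsum : ∑ j', W i0 j' * W i0 j'
          = W i0 j0 * W i0 j0 + ∑ j' ∈ Finset.univ.erase j0, W i0 j' * W i0 j' := by
        exact (Finset.add_sum_erase _ _ (Finset.mem_univ j0)).symm
      have hle : ∑ j' ∈ Finset.univ.erase j0, W i0 j' * W i0 j' ≤ 0 := by
        have : (fun j => W i0 j) ⬝ᵥ (fun j => W i0 j) = ∑ j', W i0 j' * W i0 j' := rfl
        rw [this, hsum, hdd] at hb2
        linarith
      have hz : ∀ j' ∈ Finset.univ.erase j0, W i0 j' * W i0 j' = 0 := by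
        intro j' hj'
        have hnn : ∀ j'' ∈ Finset.univ.erase j0, 0 ≤ W i0 j'' * W i0 j'' :=
          fun j'' _ => mul_self_nonneg _
        have := Finset.sum_nonneg hnn
        have heq : ∑ j'' ∈ Finset.univ.erase j0, W i0 j'' * W i0 j'' = 0 := le_antisymm hle this
        exact (Finset.sum_eq_zero_iff_of_nonneg hnn).mp heq j' hj'
      have hjmem : j ∈ Finset.univ.erase j0 := Finset.mem_erase.mpr ⟨hj, Finset.mem_univ j⟩
      exact mul_self_eq_zero.mp (hz j hjmem)
    -- Step F: columns vanish off the diagonal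
    have hcol : ∀ (j1 : Fin n) (hj1 : (j1 : ℕ) < r) (i : Fin m),
        i ≠ ⟨(j1 : ℕ), lt_of_lt_of_le hj1 hrm⟩ → W i j1 = 0 := by
      intro j1 hj1 i hi
      have hb := opF W (Pi.single j1 1)
      have hsv : (W *ᵥ Pi.single j1 1) = fun i => W i j1 := by
        funext i'
        rw [Matrix.mulVec_single]
        simp
      have hdot : (Pi.single j1 1 : Fin n → ℝ) ⬝ᵥ Pi.single j1 1 = 1 := by
        simp [dotProduct, Pi.single_apply]
      rw [hsv, hdot, mul_one] at hb
      have hb2 : (fun i => W i j1) ⬝ᵥ (fun i => W i j1) ≤ 1 := by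
        have h2 : specNorm W ^ 2 ≤ 1 := by nlinarith [specNorm_nonneg W]
        linarith
      set i1 : Fin m := ⟨(j1 : ℕ), lt_of_lt_of_le hj1 hrm⟩ with hi1
      have hi1r : ((i1 : Fin m) : ℕ) < r := hj1
      have hdd : W i1 j1 = 1 := by
        have := hdiag i1 hi1r
        have hjeq : (⟨((i1 : Fin m) : ℕ), lt_of_lt_of_le hi1r hrn⟩ : Fin n) = j1 := by
          ext; simp [hi1]
        rwa [hjeq] at this
      have hsum : ∑ i', W i' j1 * W i' j1
          = W i1 j1 * W i1 j1 + ∑ i' ∈ Finset.univ.erase i1, W i' j1 * W i' j1 := by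
        exact (Finset.add_sum_erase _ _ (Finset.mem_univ i1)).symm
      have hle : ∑ i' ∈ Finset.univ.erase i1, W i' j1 * W i' j1 ≤ 0 := by
        have : (fun i => W i j1) ⬝ᵥ (fun i => W i j1) = ∑ i', W i' j1 * W i' j1 := rfl
        rw [this, hsum, hdd] at hb2
        linarith
      have hnn : ∀ i'' ∈ Finset.univ.erase i1, 0 ≤ W i'' j1 * W i'' j1 :=
        fun i'' _ => mul_self_nonneg _
      have heq : ∑ i'' ∈ Finset.univ.erase i1, W i'' j1 * W i'' j1 = 0 :=
        le_antisymm hle (Finset.sum_nonneg hnn)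
      have hmem : i ∈ Finset.univ.erase i1 := Finset.mem_erase.mpr ⟨hi, Finset.mem_univ i⟩
      exact mul_self_eq_zero.mp ((Finset.sum_eq_zero_iff_of_nonneg hnn).mp heq i hmem)
    -- Assemble Z
    set Z := W - Jmat m n r with hZdef
    have hZ0 : ∀ (i : Fin m) (j : Fin n), ((i : ℕ) < r ∨ (j : ℕ) < r) → Z i j = 0 := by
      intro i j hij
      rw [hZdef, Matrix.sub_apply]
      rcases hij with hi | hj
      · by_cases hje : j = ⟨(i : ℕ), lt_of_lt_of_le hi hrn⟩
        · subst hje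
          rw [hdiag i hi]
          have : Jmat m n r i ⟨(i : ℕ), lt_of_lt_of_le hi hrn⟩ = 1 := by
            simp [Jmat, hi]
          rw [this, sub_self]
        · rw [hrow i hi j hje]
          have : Jmat m n r i j = 0 := by
            have hne : ¬((i : ℕ) = (j : ℕ) ∧ (i : ℕ) < r) := by
              rintro ⟨h1, _⟩
              exact hje (by ext; simp [← h1])
            simp [Jmat, hne]
          rw [this, sub_zero]
      · by_cases hie : i = ⟨(j : ℕ), lt_of_lt_of_le hj hrm⟩
        · have hir : (i : ℕ) < r := by rw [hie]; exact hj
          have hje : j = ⟨(i : ℕ), lt_of_lt_of_le hir hrn⟩ := by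
            ext; simp [hie]
          rw [hje, hdiag i hir]
          have : Jmat m n r i ⟨(i : ℕ), lt_of_lt_of_le hir hrn⟩ = 1 := by
            simp [Jmat, hir]
          rw [this, sub_self]
        · rw [hcol j hj i hie]
          have : Jmat m n r i j = 0 := by
            have hne : ¬((i : ℕ) = (j : ℕ) ∧ (i : ℕ) < r) := by
              rintro ⟨h1, _⟩
              exact hie (by ext; simp [h1])
            simp [Jmat, hne]
          rw [this, sub_zero]
    refine ⟨Z, hZ0, ?_, by rw [hZdef]; abel⟩
    -- spectral norm of Z
    apply specNorm_le_of_opT _ zero_le_one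
    intro u
    have hZrow : ∀ (i : Fin m) (j : Fin n), (i : ℕ) < r → Z i j = 0 :=
      fun i j hh => hZ0 i j (Or.inl hh)
    have hmask : Zᵀ *ᵥ u = Wᵀ *ᵥ maskGe r u := by
      rw [mulVec_maskGe r Z hZrow u, hZdef, Matrix.transpose_sub, Matrix.sub_mulVec,
        JmatT_mulVec_maskGe hrm, sub_zero]
    rw [hmask]
    have h1 := opT W (maskGe r u)
    have h2 : specNorm W ^ 2 ≤ 1 := by nlinarith [specNorm_nonneg W]
    have h3 := maskGe_dot_le r u
    have h4 := dot_self_nonneg (maskGe r u)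
    have h5 : (1:ℝ)^2 * (u ⬝ᵥ u) = u ⬝ᵥ u := by ring
    rw [h5]
    nlinarith

  · -- structure → subgradient
    rintro ⟨Z, hZ0, hZ1, rfl⟩
    have hZrow : ∀ (i : Fin m) (j : Fin n), (i : ℕ) < r → Z i j = 0 := fun i j hh => hZ0 i j (Or.inl hh)
    have hZcol : ∀ (i : Fin m) (j : Fin n), (j : ℕ) < r → Z i j = 0 := fun i j hh => hZ0 i j (Or.inr hh)
    -- spectral norm of J + Z is at most 1
    have hWspec : specNorm (Jmat m n r + Z) ≤ 1 := by
      apply specNorm_le_of_opT _ zero_le_one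
      intro u
      have humask : u = maskLt r u + maskGe r u := by
        funext i
        by_cases hh : (i : ℕ) < r
        · simp [maskLt, maskGe, hh, Nat.not_le.mpr hh]
        · simp [maskLt, maskGe, hh, Nat.le_of_not_lt hh]
      have hsplit : (Jmat m n r + Z)ᵀ *ᵥ u
          = (Jmat m n r)ᵀ *ᵥ maskLt r u + Zᵀ *ᵥ maskGe r u := by
        rw [Matrix.transpose_add, Matrix.add_mulVec]
        congr 1
        · conv_lhs => rw [humask]
          rw [Matrix.mulVec_add, JmatT_mulVec_maskGe hrm, add_zero]
        · exact mulVec_maskGe r Z hZrow u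
      have hcross : ((Jmat m n r)ᵀ *ᵥ maskLt r u) ⬝ᵥ (Zᵀ *ᵥ maskGe r u) = 0 := by
        rw [dotProduct]
        apply Finset.sum_eq_zero
        intro j _
        by_cases hh : (j : ℕ) < r
        · have hz : (Zᵀ *ᵥ maskGe r u) j = 0 := by
            simp only [Matrix.mulVec, dotProduct, Matrix.transpose_apply]
            exact Finset.sum_eq_zero fun i _ => by rw [hZcol i j hh, zero_mul]
          rw [hz, mul_zero]
        · rw [JmatT_mulVec hrm, dif_neg hh, zero_mul]
      have hJbd : ((Jmat m n r)ᵀ *ᵥ maskLt r u) ⬝ᵥ ((Jmat m n r)ᵀ *ᵥ maskLt r u)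
          ≤ maskLt r u ⬝ᵥ maskLt r u := by
        rw [dot_self_transform, mul_transpose_eq_mul_conjTranspose, Jmat_eq_rdiag,
          rdiag_mul_conjTranspose _ (fun i hi => by
            rw [if_neg (Nat.not_lt.mpr (le_trans hrn hi))])]
        simp only [dotProduct, Matrix.mulVec_diagonal]
        apply Finset.sum_le_sum
        intro i _
        by_cases hh : (i : ℕ) < r
        · simp [hh]
        · simp only [hh, if_false]
          rw [zero_pow (by norm_num), zero_mul, mul_zero]
          exact mul_self_nonneg _
      have hZbd : (Zᵀ *ᵥ maskGe r u) ⬝ᵥ (Zᵀ *ᵥ maskGe r u) ≤ maskGe r u ⬝ᵥ maskGe r u := by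
        have h1 := opT Z (maskGe r u)
        have h2 : specNorm Z ^ 2 ≤ 1 := by nlinarith [specNorm_nonneg Z]
        nlinarith [dot_self_nonneg (maskGe r u)]
      rw [hsplit, dot_add_expand, hcross]
      have := mask_dot_split r u
      have h3 : (1:ℝ)^2 * (u ⬝ᵥ u) = u ⬝ᵥ u := by ring
      rw [h3]
      linarith
    -- pairing with the diagonal
    have hWD : minp (Jmat m n r + Z) (rdiag n σ) = ∑ i, σ i := by
      rw [minp_rdiag]
      apply Finset.sum_congr rfl
      intro i _
      by_cases hh : (i : ℕ) < r
      · have hin : (i : ℕ) < n := lt_of_lt_of_le hh hrn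
        rw [dif_pos hin]
        have hJ : Jmat m n r i ⟨(i : ℕ), hin⟩ = 1 := by simp [Jmat, hh]
        have hz : Z i ⟨(i : ℕ), hin⟩ = 0 := hZrow _ _ hh
        rw [Matrix.add_apply, hJ, hz, add_zero, one_mul]
      · have hz : σ i = 0 := hσ0 i (Nat.le_of_not_lt hh)
        rw [hz]
        by_cases hin : (i : ℕ) < n
        · rw [dif_pos hin, mul_zero]
        · rw [dif_neg hin]
    intro Y
    rw [minp_sub, hWD, nucD]
    have h1 := minp_le_spec_mul_nuc (Jmat m n r + Z) Y
    have h2 : specNorm (Jmat m n r + Z) * nuclearNorm Y ≤ 1 * nuclearNorm Y :=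
      mul_le_mul_of_nonneg_right hWspec (nuclearNorm_nonneg Y)
    linarith

end NucAux

open NucAux

/- STATEMENT 4: Let X = U [Diag(σ) 0] Vᵀ be an SVD of X with rank X = r (σ nonincreasing,
σᵢ > 0 for i < r and σᵢ = 0 for i ≥ r).  Then W lies in the convex subdifferential of the
nuclear norm at X iff W = U₁V₁ᵀ + U₂ Z V₂ᵀ with ‖Z‖ ≤ 1; here U₁V₁ᵀ = U J Vᵀ with J the
rank-r partial identity, and U₂ Z V₂ᵀ = U Z' Vᵀ where Z' is supported on indices ≥ r. -/
theorem stmt4 (m n r : ℕ) (hrm : r ≤ m) (hrn : r ≤ n)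
    (U : Matrix (Fin m) (Fin m) ℝ) (V : Matrix (Fin n) (Fin n) ℝ)
    (hU : Uᵀ * U = 1) (hU2 : U * Uᵀ = 1) (hV : Vᵀ * V = 1) (hV2 : V * Vᵀ = 1)
    (σ : Fin m → ℝ) (hσanti : Antitone σ)
    (hσpos : ∀ i : Fin m, (i : ℕ) < r → 0 < σ i)
    (hσ0 : ∀ i : Fin m, r ≤ (i : ℕ) → σ i = 0)
    (X : Matrix (Fin m) (Fin n) ℝ)
    (hX : X = U * (Matrix.of fun (i : Fin m) (j : Fin n) => if (i : ℕ) = (j : ℕ) then σ i else 0) * Vᵀ)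
    (W : Matrix (Fin m) (Fin n) ℝ) :
    (∀ Y, nuclearNorm X + minp W (Y - X) ≤ nuclearNorm Y) ↔
      ∃ Z : Matrix (Fin m) (Fin n) ℝ,
        (∀ (i : Fin m) (j : Fin n), ((i : ℕ) < r ∨ (j : ℕ) < r) → Z i j = 0) ∧ specNorm Z ≤ 1 ∧
        W = U * ((Matrix.of fun (i : Fin m) (j : Fin n) =>
          if (i : ℕ) = (j : ℕ) ∧ (i : ℕ) < r then (1:ℝ) else 0) + Z) * Vᵀ := by
  have hXd : X = U * rdiag n σ * Vᵀ := hX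
  have hWrec : W = U * (Uᵀ * W * V) * Vᵀ := by
    simp only [← Matrix.mul_assoc]
    rw [hU2, Matrix.one_mul, Matrix.mul_assoc, hV2, Matrix.mul_one]
  constructor
  · intro hsub
    have hred : ∀ Y, nuclearNorm (rdiag n σ) + minp (Uᵀ * W * V) (Y - rdiag n σ)
        ≤ nuclearNorm Y := by
      intro Y
      have h1 := hsub (U * Y * Vᵀ)
      rw [hXd] at h1
      rw [nuclearNorm_conj U V (rdiag n σ) hU2 hV, nuclearNorm_conj U V Y hU2 hV] at h1
      have hsubm : U * Y * Vᵀ - U * rdiag n σ * Vᵀ = U * (Y - rdiag n σ) * Vᵀ := by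
        rw [Matrix.mul_sub, Matrix.sub_mul]
      rw [hsubm] at h1
      rw [hWrec] at h1
      rw [minp_conj U V _ _ hU hV] at h1
      exact h1
    obtain ⟨Z, hZ0, hZ1, hZeq⟩ := (core hrm hrn σ hσpos hσ0 (Uᵀ * W * V)).mp hred
    refine ⟨Z, hZ0, hZ1, ?_⟩
    exact hWrec.trans (by rw [hZeq]; rfl)
  · rintro ⟨Z, hZ0, hZ1, hWeq⟩
    have hW' : Uᵀ * W * V = Jmat m n r + Z := by
      rw [hWeq]
      show Uᵀ * (U * (Jmat m n r + Z) * Vᵀ) * V = Jmat m n r + Z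
      simp only [← Matrix.mul_assoc]
      rw [hU, Matrix.one_mul, Matrix.mul_assoc, hV, Matrix.mul_one]
    have hred := (core hrm hrn σ hσpos hσ0 (Uᵀ * W * V)).mpr ⟨Z, hZ0, hZ1, hW'⟩
    intro Y
    have h1 := hred (Uᵀ * Y * V)
    rw [hXd]
    rw [nuclearNorm_conj U V (rdiag n σ) hU2 hV]
    have hYrec : Y = U * (Uᵀ * Y * V) * Vᵀ := by
      simp only [← Matrix.mul_assoc]
      rw [hU2, Matrix.one_mul, Matrix.mul_assoc, hV2, Matrix.mul_one]
    have hsubm : U * (Uᵀ * Y * V) * Vᵀ - U * rdiag n σ * Vᵀ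
        = U * ((Uᵀ * Y * V) - rdiag n σ) * Vᵀ := by
      rw [Matrix.mul_sub, Matrix.sub_mul]
    conv_rhs => rw [hYrec]
    rw [nuclearNorm_conj U V (Uᵀ * Y * V) hU2 hV]
    conv_lhs => rw [hWrec, hYrec]
    rw [hsubm, minp_conj U V _ _ hU hV]
    exact h1
end

section
/- Let 𝒮 : ℝ^{m×m} → 𝕊^m and 𝒳 : ℝ^{m×m} → ℝ^{m×m} be defined by 𝒮(Y) = (Y + Yᵀ)/2 and 𝒳(Y) = (Y − Yᵀ)/2. If Σ ∈ ℝ^{m×m} has all entries strictly between 0 and 1, and Γ ∈ ℝ^{m×m} satisfies 𝒮(Γ) + Σ ∘ 𝒳(Γ) = 0 (where ∘ is the Hadamard product), then Γ = 0. -/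
/- The pair (a, b) = (Γᵢⱼ, Γⱼᵢ) solves the 2×2 linear system
(1 + s) a + (1 - s) b = 0, (1 - t) a + (1 + t) b = 0 with s = Σᵢⱼ, t = Σⱼᵢ,
whose determinant 2 (s + t) is positive. -/

theorem eq_zero_of_symm_add_mul_skew_eq_zero {K : Type*} [Field K] [CharZero K] {a b s t : K}
    (hst : s + t ≠ 0) (h₁ : (a + b) / 2 + s * ((a - b) / 2) = 0)
    (h₂ : (b + a) / 2 + t * ((b - a) / 2) = 0) : a = 0 := by
  have h : (s + t) * a = 0 := by linear_combination (1 + t) * h₁ - (1 - s) * h₂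
  exact (mul_eq_zero.mp h).resolve_left hst

theorem stmt5 (m : ℕ) (Sig Γ : Matrix (Fin m) (Fin m) ℝ)
    (hSig : ∀ i j, 0 < Sig i j ∧ Sig i j < 1)
    (heq : ∀ i j, (Γ i j + Γ j i) / 2 + Sig i j * ((Γ i j - Γ j i) / 2) = 0) :
    Γ = 0 := by
  ext i j
  exact eq_zero_of_symm_add_mul_skew_eq_zero (add_pos (hSig i j).1 (hSig j i).1).ne'
    (heq i j) (heq j i)
end

section
/- For absolutely symmetric functions Ψ̂ : ℝᵐ → (−∞, +∞] (i.e., Ψ̂(Px) = Ψ̂(x) for every signed permutation matrix P), the composition Ψ̂ ∘ σ on ℝ^{m×n} satisfies (Ψ̂ ∘ σ)* = Ψ̂* ∘ σ, where * denotes the Fenchel conjugate and σ the singular value map. -/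
open Matrix
open scoped BigOperators

/-- Fenchel conjugate of an extended-real-valued function on ℝ^{m×n}
with the trace inner product. -/
noncomputable def conjM {m n : ℕ} (F : Matrix (Fin m) (Fin n) ℝ → EReal)
    (Y : Matrix (Fin m) (Fin n) ℝ) : EReal :=
  ⨆ X : Matrix (Fin m) (Fin n) ℝ, (((Xᵀ * Y).trace : ℝ) : EReal) - F X

/-- Fenchel conjugate of an extended-real-valued function on ℝᵐ. -/
noncomputable def conjV {m : ℕ} (f : (Fin m → ℝ) → EReal) (y : Fin m → ℝ) : EReal :=
  ⨆ x : Fin m → ℝ, (((∑ i, x i * y i : ℝ)) : EReal) - f x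


namespace Stmt17

open Finset Polynomial

variable {m n : ℕ}

lemma filter_le_range {m p : ℕ} (hp : p < m) :
    (range m).filter (fun k => k ≤ p) = range (p + 1) := by
  ext k; simp [Nat.lt_succ_iff]; omega

lemma filter_ge_range (k m : ℕ) :
    (range m).filter (fun p => k ≤ p) = Finset.Ico k m := by
  ext p; simp [Finset.mem_Ico]; omega

lemma telesc (f : ℕ → ℝ) {k m : ℕ} (h : k ≤ m) :
    ∑ x ∈ Finset.Ico k m, (f x - f (x + 1)) = f k - f m := by
  rw [Finset.sum_Ico_eq_sum_range]
  have h2 := Finset.sum_range_sub' (fun j => f (k + j)) (m - k)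
  rw [Nat.add_sub_cancel' h] at h2
  simpa only [Nat.add_zero, Nat.add_assoc] using h2

lemma abel (m : ℕ) (s c : ℕ → ℝ) (hsm : s m = 0) :
    ∑ k ∈ range m, s k * c k
      = ∑ p ∈ range m, (s p - s (p + 1)) * ∑ k ∈ range (p + 1), c k := by
  have h1 : ∀ p ∈ range m, (s p - s (p+1)) * ∑ k ∈ range (p + 1), c k
      = ∑ k ∈ range m, (if k ≤ p then (s p - s (p+1)) * c k else 0) := by
    intro p hp
    rw [← Finset.sum_filter, filter_le_range (mem_range.1 hp), Finset.mul_sum]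
  rw [Finset.sum_congr rfl h1, Finset.sum_comm]
  refine Finset.sum_congr rfl (fun k hk => ?_)
  rw [Finset.sum_ite, Finset.sum_const_zero, add_zero, filter_ge_range, ← Finset.sum_mul,
    telesc s (le_of_lt (mem_range.1 hk)), hsm, sub_zero]

/-- Double Abel summation. -/
lemma double_abel (m : ℕ) (s t : ℕ → ℝ) (M : ℕ → ℕ → ℝ) (hsm : s m = 0) (htm : t m = 0) :
    ∑ k ∈ range m, ∑ l ∈ range m, s k * t l * M k l
      = ∑ p ∈ range m, ∑ q ∈ range m, (s p - s (p + 1)) * (t q - t (q + 1)) *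
          ∑ l ∈ range (q + 1), ∑ k ∈ range (p + 1), M k l := by
  have h1 : ∀ k, ∑ l ∈ range m, s k * t l * M k l
      = s k * ∑ l ∈ range m, t l * M k l := by
    intro k; rw [Finset.mul_sum]; exact Finset.sum_congr rfl fun l _ => by ring
  simp_rw [h1]
  rw [abel m s _ hsm]
  refine Finset.sum_congr rfl (fun p hp => ?_)
  rw [Finset.sum_comm]
  have h2 : ∑ l ∈ range m, ∑ k ∈ range (p+1), t l * M k l
      = ∑ l ∈ range m, t l * ∑ k ∈ range (p+1), M k l := by
    refine Finset.sum_congr rfl (fun l _ => ?_); rw [Finset.mul_sum]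
  rw [h2, abel m t _ htm, Finset.mul_sum]
  refine Finset.sum_congr rfl (fun q hq => ?_)
  ring

/-- Core substochastic rearrangement bound. -/
lemma core (m : ℕ) (s t : ℕ → ℝ) (M : ℕ → ℕ → ℝ)
    (hs0 : ∀ k, 0 ≤ s k) (ht0 : ∀ k, 0 ≤ t k)
    (hsa : ∀ k, s (k + 1) ≤ s k) (hta : ∀ k, t (k + 1) ≤ t k)
    (hsm : s m = 0) (htm : t m = 0)
    (hM0 : ∀ k l, 0 ≤ M k l)
    (hrow : ∀ k, ∑ l ∈ range m, M k l ≤ 1)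
    (hcol : ∀ l, ∑ k ∈ range m, M k l ≤ 1) :
    ∑ k ∈ range m, ∑ l ∈ range m, s k * t l * M k l ≤ ∑ i ∈ range m, s i * t i := by
  have hRHS : ∑ i ∈ range m, s i * t i
      = ∑ k ∈ range m, ∑ l ∈ range m, s k * t l * (if k = l then (1:ℝ) else 0) := by
    refine Finset.sum_congr rfl (fun k hk => ?_)
    simp_rw [mul_ite, mul_one, mul_zero]
    rw [Finset.sum_ite_eq (range m) k (fun l => s k * t l)]
    simp [hk]
  have hL := double_abel m s t M hsm htm
  have hN := double_abel m s t (fun k l => if k = l then (1:ℝ) else 0) hsm htm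
  rw [hL, hRHS, hN]
  refine Finset.sum_le_sum (fun p hp => Finset.sum_le_sum (fun q hq => ?_))
  have hα : 0 ≤ s p - s (p + 1) := sub_nonneg.2 (hsa p)
  have hβ : 0 ≤ t q - t (q + 1) := sub_nonneg.2 (hta q)
  refine mul_le_mul_of_nonneg_left ?_ (mul_nonneg hα hβ)
  -- goal : ∑ l ≤ q, ∑ k ≤ p, M k l ≤ ∑ l ≤ q, ∑ k ≤ p, [k = l]
  have hminN : ∑ l ∈ range (q+1), ∑ k ∈ range (p+1), (if k = l then (1:ℝ) else 0)
      = (min (p+1) (q+1) : ℕ) := by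
    have h1 : ∀ l, ∑ k ∈ range (p+1), (if k = l then (1:ℝ) else 0)
        = if l ≤ p then 1 else 0 := by
      intro l
      rw [Finset.sum_ite_eq' (range (p+1)) l (fun _ => (1:ℝ))]
      simp [Nat.lt_succ_iff]
    simp_rw [h1]
    rw [← Finset.sum_filter]
    have h2 : (range (q+1)).filter (fun l => l ≤ p) = range (min (p+1) (q+1)) := by
      ext l; simp [Nat.lt_succ_iff]; omega
    rw [h2]
    simp
  rw [hminN]
  have hp' := mem_range.1 hp
  have hq' := mem_range.1 hq
  rcases le_total p q with hpq | hpq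
  ·
    rw [Finset.sum_comm]
    calc ∑ k ∈ range (p+1), ∑ l ∈ range (q+1), M k l
        ≤ ∑ k ∈ range (p+1), (1:ℝ) := by
          refine Finset.sum_le_sum (fun k _ => ?_)
          refine le_trans (Finset.sum_le_sum_of_subset_of_nonneg ?_ (fun i _ _ => hM0 k i)) (hrow k)
          exact Finset.range_subset_range.2 hq'
      _ ≤ (min (p+1) (q+1) : ℕ) := by simp; omega
  · calc ∑ l ∈ range (q+1), ∑ k ∈ range (p+1), M k l
        ≤ ∑ l ∈ range (q+1), (1:ℝ) := by
          refine Finset.sum_le_sum (fun l _ => ?_)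
          refine le_trans (Finset.sum_le_sum_of_subset_of_nonneg ?_ (fun i _ _ => hM0 i l)) (hcol l)
          exact Finset.range_subset_range.2 hp'
      _ ≤ (min (p+1) (q+1) : ℕ) := by simp; omega


lemma exists_comp_perm {α : Type*} [DecidableEq α] : ∀ {m : ℕ} {f g : Fin m → α},
    (Multiset.map f Finset.univ.val = Multiset.map g Finset.univ.val) →
    ∃ e : Equiv.Perm (Fin m), ∀ i, f i = g (e i) := by
  intro m
  induction m with
  | zero => exact fun _ => ⟨1, fun i => i.elim0⟩
  | succ k ih =>
    intro f g h
    have h0 : f 0 ∈ Multiset.map g Finset.univ.val := by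
      rw [← h]
      exact Multiset.mem_map_of_mem f (Finset.mem_univ_val 0)
    obtain ⟨j, -, hj⟩ := Multiset.mem_map.1 h0
    set g' : Fin (k+1) → α := g ∘ (Equiv.swap 0 j) with hg'
    have hg'univ : Multiset.map g' Finset.univ.val = Multiset.map g Finset.univ.val := by
      have : Multiset.map (⇑(Equiv.swap 0 j)) Finset.univ.val = Finset.univ.val := by
        have := congr_arg Finset.val (Finset.map_univ_equiv (Equiv.swap 0 j))
        simpa [Finset.map_val] using this
      rw [hg', ← Multiset.map_map, this]
    have hdecomp : ∀ (u : Fin (k+1) → α),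
        Multiset.map u Finset.univ.val = u 0 ::ₘ Multiset.map (u ∘ Fin.succ) Finset.univ.val := by
      intro u
      rw [Fin.univ_succ, Finset.cons_val, Multiset.map_cons, Finset.map_val,
        Multiset.map_map]
      rfl
    have h' : Multiset.map f Finset.univ.val = Multiset.map g' Finset.univ.val := by
      rw [hg'univ]; exact h
    rw [hdecomp f, hdecomp g'] at h'
    have hg'0 : g' 0 = f 0 := by simp [hg', hj]
    rw [← hg'0] at h'
    have htail := (Multiset.cons_inj_right _).1 h'
    obtain ⟨e', he'⟩ := ih htail
    refine ⟨(Equiv.Perm.decomposeFin.symm (0, e')).trans (Equiv.swap 0 j), fun i => ?_⟩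
    refine Fin.cases ?_ (fun i' => ?_) i
    · simp [hj.symm]
    · have h1 : (Equiv.Perm.decomposeFin.symm (0, e')) i'.succ = (e' i').succ := by
        rw [Equiv.Perm.decomposeFin_symm_apply_succ]
        simp
      simp only [Equiv.trans_apply, h1]
      exact he' i'

lemma charpoly_conj {k : ℕ} (U A : Matrix (Fin k) (Fin k) ℝ) (hU : U * Uᵀ = 1) :
    (U * A * Uᵀ).charpoly = A.charpoly := by
  have hU' : Uᵀ * U = 1 := mul_eq_one_comm.mp hU
  have hmap : (C : ℝ →+* ℝ[X]).mapMatrix U * (C : ℝ →+* ℝ[X]).mapMatrix Uᵀ = 1 := by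
    rw [← RingHom.map_mul, hU, RingHom.map_one]
  have hcomm : ∀ (B : Matrix (Fin k) (Fin k) ℝ[X]),
      Matrix.scalar (Fin k) (X : ℝ[X]) * B = B * Matrix.scalar (Fin k) (X : ℝ[X]) :=
    fun B => Matrix.scalar_commute X (fun r => Commute.all X r) B
  have key : charmatrix (U * A * Uᵀ)
      = (C : ℝ →+* ℝ[X]).mapMatrix U * charmatrix A * (C : ℝ →+* ℝ[X]).mapMatrix Uᵀ := by
    unfold charmatrix
    rw [mul_sub, sub_mul]
    congr 1
    · rw [← hcomm, mul_assoc, hmap, mul_one]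
    · rw [← RingHom.map_mul, ← RingHom.map_mul]
  have hdet : ((C : ℝ →+* ℝ[X]).mapMatrix U).det * ((C : ℝ →+* ℝ[X]).mapMatrix Uᵀ).det = 1 := by
    rw [← det_mul, hmap, det_one]
  rw [Matrix.charpoly, Matrix.charpoly, key, det_mul, det_mul, mul_right_comm, hdet, one_mul]


lemma charpoly_diag {k : ℕ} (d : Fin k → ℝ) :
    (Matrix.diagonal d).charpoly = ∏ i : Fin k, (X - C (d i)) := by
  rw [Matrix.charpoly_of_upperTriangular _ (Matrix.blockTriangular_diagonal d)]
  simp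

lemma multiset_eq_of_prod_eq {k : ℕ} (f g : Fin k → ℝ)
    (h : ∏ i : Fin k, (X - C (f i)) = ∏ i : Fin k, (X - C (g i))) :
    Multiset.map f Finset.univ.val = Multiset.map g Finset.univ.val := by
  have hf : ∏ i : Fin k, (X - C (f i))
      = ((Finset.univ.val.map f).map (fun a => X - C a)).prod := by
    rw [Finset.prod_eq_multiset_prod, Multiset.map_map]; rfl
  have hg : ∏ i : Fin k, (X - C (g i))
      = ((Finset.univ.val.map g).map (fun a => X - C a)).prod := by
    rw [Finset.prod_eq_multiset_prod, Multiset.map_map]; rfl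
  have := congr_arg Polynomial.roots (hf ▸ hg ▸ h)
  rwa [Polynomial.roots_multiset_prod_X_sub_C, Polynomial.roots_multiset_prod_X_sub_C] at this

lemma eigenvalues_perm {k : ℕ} {A U : Matrix (Fin k) (Fin k) ℝ} (hA : A.IsHermitian)
    (d : Fin k → ℝ) (hU : U * Uᵀ = 1) (h : A = U * Matrix.diagonal d * Uᵀ) :
    ∃ e : Equiv.Perm (Fin k), ∀ i, hA.eigenvalues i = d (e i) := by
  set U₀ : Matrix (Fin k) (Fin k) ℝ := (hA.eigenvectorUnitary : Matrix (Fin k) (Fin k) ℝ) with hU₀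
  have hU₀mem := hA.eigenvectorUnitary.2
  have hU₀orth : U₀ * U₀ᵀ = 1 := by
    have := (Matrix.mem_unitaryGroup_iff).1 hU₀mem
    rwa [Matrix.star_eq_conjTranspose, Matrix.conjTranspose_eq_transpose_of_trivial] at this
  have hsp : A = U₀ * Matrix.diagonal hA.eigenvalues * U₀ᵀ := by
    have := hA.spectral_theorem
    rwa [Unitary.conjStarAlgAut_apply, Matrix.star_eq_conjTranspose, Matrix.conjTranspose_eq_transpose_of_trivial,
      show (RCLike.ofReal ∘ hA.eigenvalues : Fin k → ℝ) = hA.eigenvalues from funext fun i => rfl]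
      at this
  have h1 : (Matrix.diagonal hA.eigenvalues).charpoly = (Matrix.diagonal d).charpoly := by
    rw [← charpoly_conj U₀ _ hU₀orth, ← hsp, h, charpoly_conj U _ hU]
  rw [charpoly_diag, charpoly_diag] at h1
  exact exists_comp_perm (multiset_eq_of_prod_eq _ _ h1)


noncomputable def J (hmn : m ≤ n) : Matrix (Fin m) (Fin n) ℝ :=
  Matrix.of fun i j => if j = Fin.castLE hmn i then 1 else 0

/-- Rectangular diagonal matrix. -/
noncomputable def Δ (hmn : m ≤ n) (d : Fin m → ℝ) : Matrix (Fin m) (Fin n) ℝ :=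
  Matrix.diagonal d * J hmn

lemma J_mul_Jt (hmn : m ≤ n) : J hmn * (J hmn)ᵀ = 1 := by
  ext i k
  simp only [Matrix.mul_apply, J, Matrix.transpose_apply, Matrix.of_apply]
  rw [Finset.sum_congr rfl (fun j _ => by
    rw [ite_mul, one_mul, zero_mul, ← ite_and])]
  rcases eq_or_ne i k with rfl | hik
  · simp only [and_self]
    rw [Finset.sum_ite_eq' Finset.univ (Fin.castLE hmn i) (fun _ => (1:ℝ))]
    simp [Matrix.one_apply]
  · have : ∀ j : Fin n, ¬(j = Fin.castLE hmn i ∧ j = Fin.castLE hmn k) := by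
      rintro j ⟨rfl, hj⟩
      exact hik (Fin.castLE_injective hmn hj)
    rw [Finset.sum_congr rfl (fun j _ => if_neg (this j))]
    simp [Matrix.one_apply, hik]

lemma J_conj_entry (hmn : m ≤ n) (B : Matrix (Fin n) (Fin n) ℝ) (k l : Fin m) :
    (J hmn * B * (J hmn)ᵀ) k l = B (Fin.castLE hmn k) (Fin.castLE hmn l) := by
  have h1 : ∀ j, (J hmn * B) k j = B (Fin.castLE hmn k) j := by
    intro j
    simp only [Matrix.mul_apply, J, Matrix.of_apply, ite_mul, one_mul, zero_mul]
    rw [Finset.sum_ite_eq' Finset.univ (Fin.castLE hmn k) (fun p => B p j)]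
    simp
  calc (J hmn * B * (J hmn)ᵀ) k l
      = ∑ x : Fin n, (J hmn * B) k x * (J hmn)ᵀ x l := Matrix.mul_apply
    _ = ∑ x : Fin n, (if x = Fin.castLE hmn l then (J hmn * B) k x else 0) := by
        refine Finset.sum_congr rfl (fun x _ => ?_)
        simp only [Matrix.transpose_apply, J, Matrix.of_apply, mul_ite, mul_one, mul_zero]
    _ = (J hmn * B) k (Fin.castLE hmn l) := by
        rw [Finset.sum_ite_eq' Finset.univ (Fin.castLE hmn l) (fun x => (J hmn * B) k x)]
        simp
    _ = B (Fin.castLE hmn k) (Fin.castLE hmn l) := h1 _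

lemma trace_formula (hmn : m ≤ n) (σ τ : Fin m → ℝ)
    (U₁ U₂ : Matrix (Fin m) (Fin m) ℝ) (V₁ V₂ : Matrix (Fin n) (Fin n) ℝ) :
    ((U₁ * Δ hmn σ * V₁ᵀ)ᵀ * (U₂ * Δ hmn τ * V₂ᵀ)).trace
      = ∑ k : Fin m, ∑ l : Fin m, σ k * τ l *
          ((U₁ᵀ * U₂) k l * (V₂ᵀ * V₁) (Fin.castLE hmn l) (Fin.castLE hmn k)) := by
  have h1 : (U₁ * Δ hmn σ * V₁ᵀ)ᵀ * (U₂ * Δ hmn τ * V₂ᵀ)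
      = V₁ * ((Δ hmn σ)ᵀ * (U₁ᵀ * (U₂ * (Δ hmn τ * V₂ᵀ)))) := by
    simp only [Matrix.transpose_mul, Matrix.transpose_transpose, Matrix.mul_assoc]
  rw [h1, Matrix.trace_mul_comm]
  have h2 : (Δ hmn σ)ᵀ * (U₁ᵀ * (U₂ * (Δ hmn τ * V₂ᵀ))) * V₁
      = (J hmn)ᵀ * (Matrix.diagonal σ * (U₁ᵀ * (U₂ * (Matrix.diagonal τ * (J hmn * (V₂ᵀ * V₁)))))) := by
    simp only [Δ, Matrix.transpose_mul, Matrix.diagonal_transpose, Matrix.mul_assoc]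
  rw [h2, Matrix.trace_mul_comm]
  have h3 : Matrix.diagonal σ * (U₁ᵀ * (U₂ * (Matrix.diagonal τ * (J hmn * (V₂ᵀ * V₁))))) * (J hmn)ᵀ
      = Matrix.diagonal σ * ((U₁ᵀ * U₂) * (Matrix.diagonal τ * (J hmn * (V₂ᵀ * V₁) * (J hmn)ᵀ))) := by
    simp only [Matrix.mul_assoc]
  rw [h3, Matrix.trace]
  refine Finset.sum_congr rfl (fun k _ => ?_)
  rw [Matrix.diag_apply, Matrix.diagonal_mul, Matrix.mul_apply, Finset.mul_sum]
  refine Finset.sum_congr rfl (fun l _ => ?_)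
  rw [Matrix.diagonal_mul, J_conj_entry]
  ring


lemma J_mul_apply (hmn : m ≤ n) (B : Matrix (Fin n) (Fin n) ℝ) (k : Fin m) (j : Fin n) :
    (J hmn * B) k j = B (Fin.castLE hmn k) j := by
  simp only [Matrix.mul_apply, J, Matrix.of_apply, ite_mul, one_mul, zero_mul]
  rw [Finset.sum_ite_eq' Finset.univ (Fin.castLE hmn k) (fun p => B p j)]
  simp

lemma Δ_mul_Δt (hmn : m ≤ n) (d e : Fin m → ℝ) :
    Δ hmn d * (Δ hmn e)ᵀ = Matrix.diagonal (fun i => d i * e i) := by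
  unfold Δ
  rw [Matrix.transpose_mul, Matrix.diagonal_transpose, ← Matrix.mul_assoc,
    Matrix.mul_assoc (Matrix.diagonal d), J_mul_Jt, Matrix.mul_one,
    Matrix.diagonal_mul_diagonal]


lemma basis_matrix (b : OrthonormalBasis (Fin n) ℝ (EuclideanSpace ℝ (Fin n))) :
    (Matrix.of fun i j => b i j) * (Matrix.of fun i j => b i j)ᵀ = 1 := by
  ext i l
  have h2 := orthonormal_iff_ite.1 b.orthonormal i l
  simp only [PiLp.inner_apply, RCLike.inner_apply, starRingEnd_apply, star_trivial] at h2
  simp only [Matrix.mul_apply, Matrix.transpose_apply, Matrix.of_apply, Matrix.one_apply]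
  rw [← h2]
  exact Finset.sum_congr rfl fun _ _ => mul_comm _ _

lemma exists_svd (hmn : m ≤ n) (X : Matrix (Fin m) (Fin n) ℝ) :
    ∃ (U : Matrix (Fin m) (Fin m) ℝ) (V : Matrix (Fin n) (Fin n) ℝ),
      Uᵀ * U = 1 ∧ U * Uᵀ = 1 ∧ Vᵀ * V = 1 ∧ V * Vᵀ = 1 ∧
      X = U * Δ hmn (sval X) * Vᵀ := by
  set σ : Fin m → ℝ := sval X with hσdef
  have hH := Matrix.isHermitian_mul_conjTranspose_self X
  have hkey : ∃ U : Matrix (Fin m) (Fin m) ℝ, U * star U = 1 ∧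
      star U * (X * Xᴴ) * U = Matrix.diagonal (RCLike.ofReal ∘ hH.eigenvalues) :=
    ⟨_, (Matrix.mem_unitaryGroup_iff).1 hH.eigenvectorUnitary.2,
      by have := hH.conjStarAlgAut_star_eigenvectorUnitary
         rwa [Unitary.conjStarAlgAut_star_apply] at this⟩
  obtain ⟨U, hUU, hdiagU⟩ := hkey
  rw [Matrix.star_eq_conjTranspose, Matrix.conjTranspose_eq_transpose_of_trivial] at hUU
  rw [Matrix.star_eq_conjTranspose, Matrix.conjTranspose_eq_transpose_of_trivial U,
    show (RCLike.ofReal ∘ hH.eigenvalues : Fin m → ℝ) = hH.eigenvalues from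
      funext fun i => rfl] at hdiagU
  have hU'U : Uᵀ * U = 1 := mul_eq_one_comm.mp hUU
  set W : Matrix (Fin m) (Fin n) ℝ := Uᵀ * X with hWdef
  have hdiag : W * Wᵀ = Matrix.diagonal hH.eigenvalues := by
    rw [← hdiagU, hWdef, Matrix.transpose_mul, Matrix.transpose_transpose,
      Matrix.conjTranspose_eq_transpose_of_trivial X]
    simp only [Matrix.mul_assoc]
  have hlam : ∀ i, σ i * σ i = hH.eigenvalues i := fun i =>
    Real.mul_self_sqrt (Matrix.eigenvalues_self_mul_conjTranspose_nonneg X i)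
  -- rows of W as Euclidean vectors
  set w : Fin m → EuclideanSpace ℝ (Fin n) :=
    fun i => (WithLp.equiv 2 (Fin n → ℝ)).symm (W i) with hwdef
  have hinner : ∀ i k, (inner ℝ (w i) (w k) : ℝ) = Matrix.diagonal hH.eigenvalues i k := by
    intro i k
    rw [← hdiag]
    simp only [PiLp.inner_apply, RCLike.inner_apply, starRingEnd_apply, star_trivial,
      hwdef, WithLp.equiv_symm_apply, PiLp.toLp_apply, Matrix.mul_apply, Matrix.transpose_apply]
    exact Finset.sum_congr rfl fun _ _ => mul_comm _ _
  set s : Set (Fin n) := {j | ∃ h : (j : ℕ) < m, σ ⟨(j : ℕ), h⟩ ≠ 0} with hsdef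
  set v : Fin n → EuclideanSpace ℝ (Fin n) :=
    fun j => if h : (j : ℕ) < m then (σ ⟨(j : ℕ), h⟩)⁻¹ • w ⟨(j : ℕ), h⟩ else 0 with hvdef
  have hON : Orthonormal ℝ (s.restrict v) := by
    rw [orthonormal_iff_ite]
    rintro ⟨j, hj, hjne⟩ ⟨j', hj', hj'ne⟩
    have hvj : v j = (σ ⟨(j : ℕ), hj⟩)⁻¹ • w ⟨(j : ℕ), hj⟩ := dif_pos hj
    have hvj' : v j' = (σ ⟨(j' : ℕ), hj'⟩)⁻¹ • w ⟨(j' : ℕ), hj'⟩ := dif_pos hj'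
    show inner ℝ (v j) (v j') = _
    rw [hvj, hvj', real_inner_smul_left, real_inner_smul_right]
    rw [hinner]
    rcases eq_or_ne j j' with rfl | hne
    · simp only [Subtype.mk.injEq, Matrix.diagonal_apply_eq, if_pos rfl]
      rw [← hlam]
      have hne0 := hjne
      field_simp
      simp
    · have hFne : (⟨(j : ℕ), hj⟩ : Fin m) ≠ ⟨(j' : ℕ), hj'⟩ := by
        intro hcontra
        exact hne (Fin.ext (congrArg (Fin.val : Fin m → ℕ) hcontra))
      rw [Matrix.diagonal_apply_ne _ hFne]
      simp [Subtype.mk.injEq, hne]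
  have hcard : Module.finrank ℝ (EuclideanSpace ℝ (Fin n)) = Fintype.card (Fin n) := by
    simp
  obtain ⟨b, hb⟩ := hON.exists_orthonormalBasis_extension_of_card_eq hcard
  set B : Matrix (Fin n) (Fin n) ℝ := Matrix.of fun i j => b i j with hBdef
  have hBB : B * Bᵀ = 1 := basis_matrix b
  have hB'B : Bᵀ * B = 1 := mul_eq_one_comm.mp hBB
  have hWB : W = Δ hmn σ * B := by
    ext i j0
    have hΔ : (Δ hmn σ * B) i j0 = σ i * B (Fin.castLE hmn i) j0 := by
      rw [Δ, Matrix.mul_assoc, Matrix.diagonal_mul, J_mul_apply]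
    rw [hΔ]
    have hci : ((Fin.castLE hmn i : Fin n) : ℕ) = (i : ℕ) := rfl
    have hlt : ((Fin.castLE hmn i : Fin n) : ℕ) < m := hci ▸ i.isLt
    have hmk : (⟨((Fin.castLE hmn i : Fin n) : ℕ), hlt⟩ : Fin m) = i := Fin.ext hci
    rcases eq_or_ne (σ i) 0 with hzero | hne
    · -- row is zero
      have hwz : W i j0 = 0 := by
        have hlam0 : hH.eigenvalues i = 0 := by rw [← hlam, hzero, mul_zero]
        have hsum : ∑ j : Fin n, W i j * W i j = 0 := by
          have := congrFun (congrFun hdiag i) i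
          simp only [Matrix.mul_apply, Matrix.transpose_apply, Matrix.diagonal_apply_eq] at this
          rw [this, hlam0]
        have := (Finset.sum_eq_zero_iff_of_nonneg
          (fun j _ => mul_self_nonneg (W i j))).1 hsum j0 (Finset.mem_univ _)
        exact mul_self_eq_zero.1 this
      rw [hwz, hzero, zero_mul]
    · have hmem : (Fin.castLE hmn i : Fin n) ∈ s := ⟨hlt, by rw [hmk]; exact hne⟩
      have hbv := hb _ hmem
      have : B (Fin.castLE hmn i) j0 = (σ i)⁻¹ * W i j0 := by
        rw [hBdef]
        show b (Fin.castLE hmn i) j0 = (σ i)⁻¹ * W i j0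
        rw [hbv, hvdef]
        simp only [dif_pos hlt, hmk]
        rfl
      rw [this, ← mul_assoc, mul_inv_cancel₀ hne, one_mul]
  refine ⟨U, Bᵀ, hU'U, hUU, ?_, ?_, ?_⟩
  · rw [Matrix.transpose_transpose]; exact hBB
  · exact hB'B
  · rw [Matrix.transpose_transpose, Matrix.mul_assoc, ← hWB, hWdef, ← Matrix.mul_assoc, hUU,
      Matrix.one_mul]




lemma sval_of_conj (hmn : m ≤ n) (d : Fin m → ℝ) (hd : ∀ i, 0 ≤ d i)
    (U : Matrix (Fin m) (Fin m) ℝ) (V : Matrix (Fin n) (Fin n) ℝ)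
    (hUUt : U * Uᵀ = 1) (hVtV : Vᵀ * V = 1) :
    ∃ e : Equiv.Perm (Fin m), ∀ i, sval (U * Δ hmn d * Vᵀ) i = d (e i) := by
  set X := U * Δ hmn d * Vᵀ with hXdef
  have hH := Matrix.isHermitian_mul_conjTranspose_self X
  have hXXt : X * Xᴴ = U * Matrix.diagonal (fun i => d i * d i) * Uᵀ := by
    rw [Matrix.conjTranspose_eq_transpose_of_trivial, hXdef]
    have h1 : (U * Δ hmn d * Vᵀ) * (U * Δ hmn d * Vᵀ)ᵀ
        = U * (Δ hmn d * ((Vᵀ * V) * ((Δ hmn d)ᵀ * Uᵀ))) := by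
      simp only [Matrix.transpose_mul, Matrix.transpose_transpose, Matrix.mul_assoc]
    rw [h1, hVtV, Matrix.one_mul, ← Matrix.mul_assoc (Δ hmn d), Δ_mul_Δt,
      ← Matrix.mul_assoc]
  obtain ⟨e, he⟩ := eigenvalues_perm hH (fun i => d i * d i) hUUt hXXt
  refine ⟨e, fun i => ?_⟩
  show Real.sqrt ((Matrix.isHermitian_mul_conjTranspose_self X).eigenvalues i) = d (e i)
  rw [he i]
  exact Real.sqrt_mul_self (hd _)


lemma sval_nonneg (X : Matrix (Fin m) (Fin n) ℝ) (i : Fin m) : 0 ≤ sval X i :=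
  Real.sqrt_nonneg _

lemma sum_univ_eq {m : ℕ} (f : ℕ → ℝ) (g : Fin m → ℝ) (h : ∀ k : Fin m, f k = g k) :
    ∑ k ∈ Finset.range m, f k = ∑ k : Fin m, g k := by
  rw [← Fin.sum_univ_eq_sum_range]
  exact Finset.sum_congr rfl fun i _ => h i

lemma perm_bound (σ τ : Fin m → ℝ) (M : Fin m → Fin m → ℝ)
    (hσ0 : ∀ i, 0 ≤ σ i) (hτ0 : ∀ i, 0 ≤ τ i)
    (hM0 : ∀ k l, 0 ≤ M k l)
    (hrow : ∀ k, ∑ l, M k l ≤ 1) (hcol : ∀ l, ∑ k, M k l ≤ 1) :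
    ∃ π : Equiv.Perm (Fin m), ∑ k, ∑ l, σ k * τ l * M k l ≤ ∑ j, σ (π j) * τ j := by
  set es := Tuple.sort (fun i => -σ i) with hesdef
  set et := Tuple.sort (fun i => -τ i) with hetdef
  have hsanti : ∀ k l : Fin m, k ≤ l → σ (es l) ≤ σ (es k) := by
    intro k l hkl
    have := Tuple.monotone_sort (fun i => -σ i) hkl
    simpa using this
  have htanti : ∀ k l : Fin m, k ≤ l → τ (et l) ≤ τ (et k) := by
    intro k l hkl
    have := Tuple.monotone_sort (fun i => -τ i) hkl
    simpa using this
  set s : ℕ → ℝ := fun k => if h : k < m then σ (es ⟨k, h⟩) else 0 with hsdef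
  set t : ℕ → ℝ := fun k => if h : k < m then τ (et ⟨k, h⟩) else 0 with htdef
  set M' : ℕ → ℕ → ℝ := fun k l =>
    if h : k < m then (if h' : l < m then M (es ⟨k, h⟩) (et ⟨l, h'⟩) else 0) else 0 with hM'def
  have hs0' : ∀ k, 0 ≤ s k := by
    intro k; rw [hsdef]; dsimp only; split
    · exact hσ0 _
    · exact le_rfl
  have ht0' : ∀ k, 0 ≤ t k := by
    intro k; rw [htdef]; dsimp only; split
    · exact hτ0 _
    · exact le_rfl
  have hsa : ∀ k, s (k + 1) ≤ s k := by
    intro k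
    rw [hsdef]; dsimp only
    by_cases h1 : k + 1 < m
    · have h0 : k < m := by omega
      rw [dif_pos h1, dif_pos h0]
      exact hsanti ⟨k, h0⟩ ⟨k + 1, h1⟩ (by rw [Fin.mk_le_mk]; omega)
    · rw [dif_neg h1]
      split
      · exact hσ0 _
      · exact le_rfl
  have hta : ∀ k, t (k + 1) ≤ t k := by
    intro k
    rw [htdef]; dsimp only
    by_cases h1 : k + 1 < m
    · have h0 : k < m := by omega
      rw [dif_pos h1, dif_pos h0]
      exact htanti ⟨k, h0⟩ ⟨k + 1, h1⟩ (by rw [Fin.mk_le_mk]; omega)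
    · rw [dif_neg h1]
      split
      · exact hτ0 _
      · exact le_rfl
  have hsm : s m = 0 := by rw [hsdef]; dsimp only; rw [dif_neg (lt_irrefl m)]
  have htm : t m = 0 := by rw [htdef]; dsimp only; rw [dif_neg (lt_irrefl m)]
  have hM0' : ∀ k l, 0 ≤ M' k l := by
    intro k l; rw [hM'def]; dsimp only
    split
    · split
      · exact hM0 _ _
      · exact le_rfl
    · exact le_rfl
  have hrow' : ∀ k, ∑ l ∈ range m, M' k l ≤ 1 := by
    intro k
    by_cases hk : k < m
    · have heq : ∑ l ∈ range m, M' k l = ∑ l : Fin m, M (es ⟨k, hk⟩) (et l) := by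
        refine sum_univ_eq _ _ (fun l => ?_)
        rw [hM'def]; dsimp only
        rw [dif_pos hk, dif_pos l.isLt, Fin.eta]
      rw [heq, Equiv.sum_comp et (fun l => M (es ⟨k, hk⟩) l)]
      exact hrow _
    · have heq : ∑ l ∈ range m, M' k l = 0 :=
        Finset.sum_eq_zero fun l _ => by rw [hM'def]; dsimp only; rw [dif_neg hk]
      rw [heq]; exact zero_le_one
  have hcol' : ∀ l, ∑ k ∈ range m, M' k l ≤ 1 := by
    intro l
    by_cases hl : l < m
    · have heq : ∑ k ∈ range m, M' k l = ∑ k : Fin m, M (es k) (et ⟨l, hl⟩) := by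
        refine sum_univ_eq _ _ (fun k => ?_)
        rw [hM'def]; dsimp only
        rw [dif_pos k.isLt, dif_pos hl, Fin.eta]
      rw [heq, Equiv.sum_comp es (fun k => M k (et ⟨l, hl⟩))]
      exact hcol _
    · have heq : ∑ k ∈ range m, M' k l = 0 :=
        Finset.sum_eq_zero fun k _ => by simp [hM'def, hl]
      rw [heq]; exact zero_le_one
  have hmain := core m s t M' hs0' ht0' hsa hta hsm htm hM0' hrow' hcol'
  have hL : ∑ k ∈ range m, ∑ l ∈ range m, s k * t l * M' k l
      = ∑ k : Fin m, ∑ l : Fin m, σ k * τ l * M k l := by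
    have step1 : ∑ k ∈ range m, ∑ l ∈ range m, s k * t l * M' k l
        = ∑ k : Fin m, ∑ l : Fin m, σ (es k) * τ (et l) * M (es k) (et l) := by
      refine sum_univ_eq _ _ (fun k => ?_)
      refine sum_univ_eq _ _ (fun l => ?_)
      rw [hsdef, htdef, hM'def]; dsimp only
      rw [dif_pos k.isLt, dif_pos l.isLt, dif_pos k.isLt, dif_pos l.isLt, Fin.eta, Fin.eta]
    rw [step1, ← Equiv.sum_comp es (fun k => ∑ l : Fin m, σ k * τ l * M k l)]
    refine Finset.sum_congr rfl fun k _ => ?_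
    rw [← Equiv.sum_comp et (fun l => σ (es k) * τ l * M (es k) l)]
  have hR : ∑ i ∈ range m, s i * t i = ∑ j : Fin m, σ (es (et.symm j)) * τ j := by
    have step1 : ∑ i ∈ range m, s i * t i = ∑ i : Fin m, σ (es i) * τ (et i) := by
      refine sum_univ_eq _ _ (fun i => ?_)
      rw [hsdef, htdef]; dsimp only
      rw [dif_pos i.isLt, dif_pos i.isLt, Fin.eta]
    rw [step1, ← Equiv.sum_comp et (fun j => σ (es (et.symm j)) * τ j)]
    refine Finset.sum_congr rfl fun i _ => by rw [Equiv.symm_apply_apply]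
  refine ⟨et.symm.trans es, ?_⟩
  have hπ : ∑ j : Fin m, σ ((et.symm.trans es) j) * τ j
      = ∑ j : Fin m, σ (es (et.symm j)) * τ j := rfl
  rw [hπ, ← hR, ← hL]
  exact hmain

lemma vonNeumann (hmn : m ≤ n) (X Y : Matrix (Fin m) (Fin n) ℝ) :
    ∃ π : Equiv.Perm (Fin m),
      (Xᵀ * Y).trace ≤ ∑ j : Fin m, sval X (π j) * sval Y j := by
  obtain ⟨U₁, V₁, hU₁tU, hU₁Ut, hV₁tV, hV₁Vt, hX⟩ := exists_svd hmn X
  obtain ⟨U₂, V₂, hU₂tU, hU₂Ut, hV₂tV, hV₂Vt, hY⟩ := exists_svd hmn Y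
  set σ := sval X with hσdef
  set τ := sval Y with hτdef
  set A := U₁ᵀ * U₂ with hAdef
  set Bm := V₂ᵀ * V₁ with hBdef
  have htr : (Xᵀ * Y).trace = ∑ k : Fin m, ∑ l : Fin m,
      σ k * τ l * (A k l * Bm (Fin.castLE hmn l) (Fin.castLE hmn k)) := by
    conv_lhs => rw [hX, hY]
    exact trace_formula hmn σ τ U₁ U₂ V₁ V₂
  have hAAt : A * Aᵀ = 1 := by
    rw [hAdef, Matrix.transpose_mul, Matrix.transpose_transpose, Matrix.mul_assoc,
      ← Matrix.mul_assoc U₂, hU₂Ut, Matrix.one_mul, hU₁tU]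
  have hAtA : Aᵀ * A = 1 := mul_eq_one_comm.mp hAAt
  have hBBt : Bm * Bmᵀ = 1 := by
    rw [hBdef, Matrix.transpose_mul, Matrix.transpose_transpose, Matrix.mul_assoc,
      ← Matrix.mul_assoc V₁, hV₁Vt, Matrix.one_mul, hV₂tV]
  have hBtB : Bmᵀ * Bm = 1 := mul_eq_one_comm.mp hBBt
  set M : Fin m → Fin m → ℝ := fun k l =>
    (A k l ^ 2 + Bm (Fin.castLE hmn l) (Fin.castLE hmn k) ^ 2) / 2 with hMdef
  have hrowA : ∀ k : Fin m, ∑ l : Fin m, A k l ^ 2 = 1 := by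
    intro k
    have := congrFun (congrFun hAAt k) k
    simp only [Matrix.mul_apply, Matrix.transpose_apply, Matrix.one_apply_eq] at this
    rw [← this]
    exact Finset.sum_congr rfl fun l _ => (sq (A k l)).symm ▸ (pow_two (A k l))
  have hcolA : ∀ l : Fin m, ∑ k : Fin m, A k l ^ 2 = 1 := by
    intro l
    have := congrFun (congrFun hAtA l) l
    simp only [Matrix.mul_apply, Matrix.transpose_apply, Matrix.one_apply_eq] at this
    rw [← this]
    exact Finset.sum_congr rfl fun k _ => by rw [pow_two, mul_comm]
  have hsub : ∀ (f : Fin n → ℝ), (∀ j, 0 ≤ f j) →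
      ∑ l : Fin m, f (Fin.castLE hmn l) ≤ ∑ j : Fin n, f j := by
    intro f hf
    rw [show ∑ l : Fin m, f (Fin.castLE hmn l)
        = ∑ j ∈ Finset.univ.map (Fin.castLEEmb hmn), f j from
      (Finset.sum_map Finset.univ (Fin.castLEEmb hmn) f).symm]
    exact Finset.sum_le_sum_of_subset_of_nonneg (Finset.subset_univ _)
      (fun j _ _ => hf j)
  have hcolB : ∀ c : Fin n, ∑ j : Fin n, Bm j c ^ 2 = 1 := by
    intro c
    have := congrFun (congrFun hBtB c) c
    simp only [Matrix.mul_apply, Matrix.transpose_apply, Matrix.one_apply_eq] at this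
    rw [← this]
    exact Finset.sum_congr rfl fun j _ => by rw [pow_two]
  have hrowB : ∀ r : Fin n, ∑ j : Fin n, Bm r j ^ 2 = 1 := by
    intro r
    have := congrFun (congrFun hBBt r) r
    simp only [Matrix.mul_apply, Matrix.transpose_apply, Matrix.one_apply_eq] at this
    rw [← this]
    exact Finset.sum_congr rfl fun j _ => by rw [pow_two]
  have hM0 : ∀ k l, 0 ≤ M k l := by
    intro k l
    rw [hMdef]; dsimp only
    positivity
  have hrowM : ∀ k, ∑ l : Fin m, M k l ≤ 1 := by
    intro k
    have h1 : ∑ l : Fin m, Bm (Fin.castLE hmn l) (Fin.castLE hmn k) ^ 2 ≤ 1 := by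
      refine le_trans (hsub (fun j => Bm j (Fin.castLE hmn k) ^ 2) (fun j => sq_nonneg _)) ?_
      exact le_of_eq (hcolB (Fin.castLE hmn k))
    have h2 : ∑ l : Fin m, M k l
        = ((∑ l : Fin m, A k l ^ 2) + ∑ l : Fin m, Bm (Fin.castLE hmn l) (Fin.castLE hmn k) ^ 2) / 2 := by
      rw [hMdef, ← Finset.sum_add_distrib, Finset.sum_div]
    rw [h2, hrowA k]
    linarith
  have hcolM : ∀ l, ∑ k : Fin m, M k l ≤ 1 := by
    intro l
    have h1 : ∑ k : Fin m, Bm (Fin.castLE hmn l) (Fin.castLE hmn k) ^ 2 ≤ 1 := by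
      refine le_trans (hsub (fun j => Bm (Fin.castLE hmn l) j ^ 2) (fun j => sq_nonneg _)) ?_
      exact le_of_eq (hrowB (Fin.castLE hmn l))
    have h2 : ∑ k : Fin m, M k l
        = ((∑ k : Fin m, A k l ^ 2) + ∑ k : Fin m, Bm (Fin.castLE hmn l) (Fin.castLE hmn k) ^ 2) / 2 := by
      rw [hMdef, ← Finset.sum_add_distrib, Finset.sum_div]
    rw [h2, hcolA l]
    linarith
  obtain ⟨π, hπ⟩ := perm_bound σ τ M (fun i => sval_nonneg X i) (fun i => sval_nonneg Y i)
    hM0 hrowM hcolM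
  refine ⟨π, ?_⟩
  rw [htr]
  refine le_trans (Finset.sum_le_sum fun k _ => Finset.sum_le_sum fun l _ => ?_) hπ
  have hab : A k l * Bm (Fin.castLE hmn l) (Fin.castLE hmn k) ≤ M k l := by
    rw [hMdef]
    dsimp only
    nlinarith [sq_nonneg (A k l - Bm (Fin.castLE hmn l) (Fin.castLE hmn k))]
  exact mul_le_mul_of_nonneg_left hab (mul_nonneg (sval_nonneg X k) (sval_nonneg Y l))

end Stmt17

open Stmt17 Finset

/- STATEMENT 17: For an absolutely symmetric function Ψ̂ : ℝᵐ → (−∞,+∞]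
(invariant under signed permutations of the coordinates), the composition with the
singular value map σ on ℝ^{m×n} (m ≤ n) satisfies (Ψ̂ ∘ σ)* = Ψ̂* ∘ σ. -/
theorem stmt17 (m n : ℕ) (hmn : m ≤ n) (F : (Fin m → ℝ) → EReal)
    (habs : ∀ (e : Equiv.Perm (Fin m)) (ε : Fin m → ℝ), (∀ i, ε i = 1 ∨ ε i = -1) →
      ∀ x : Fin m → ℝ, F (fun i => ε i * x (e i)) = F x)
    (Y : Matrix (Fin m) (Fin n) ℝ) :
    conjM (fun X => F (sval X)) Y = conjV F (sval Y) := by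
  rw [conjM, conjV]
  apply le_antisymm
  · refine iSup_le fun X => ?_
    obtain ⟨π, hπ⟩ := vonNeumann hmn X Y
    have hFx : F (fun j => sval X (π j)) = F (sval X) := by
      have := habs π (fun _ => 1) (fun i => Or.inl rfl) (sval X)
      simpa using this
    refine le_trans ?_
      (le_iSup (fun x : Fin m → ℝ => (((∑ i, x i * sval Y i : ℝ)) : EReal) - F x)
        (fun j => sval X (π j)))
    rw [hFx]
    exact EReal.sub_le_sub (EReal.coe_le_coe_iff.2 hπ) le_rfl
  · refine iSup_le fun x => ?_
    obtain ⟨U, V, hU'U, hUU, hVtV, hVVt, hY⟩ := exists_svd hmn Y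
    set d : Fin m → ℝ := fun i => |x i| with hddef
    set X : Matrix (Fin m) (Fin n) ℝ := U * Δ hmn d * Vᵀ with hXdef
    obtain ⟨e, he⟩ := sval_of_conj hmn d (fun i => abs_nonneg _) U V hUU hVtV
    have hFX : F (sval X) = F x := by
      have hsX : sval X = fun i => d (e i) := funext he
      rw [hsX]
      have h1 : F (fun i => d (e i)) = F d := by
        have := habs e (fun _ => 1) (fun i => Or.inl rfl) d
        simpa using this
      rw [h1]
      set ε : Fin m → ℝ := fun i => if x i < 0 then (-1 : ℝ) else 1 with hεdef
      have hε : ∀ i, ε i = 1 ∨ ε i = -1 := by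
        intro i; rw [hεdef]; dsimp only; split
        · exact Or.inr rfl
        · exact Or.inl rfl
      have h2 := habs (Equiv.refl _) ε hε x
      have h3 : (fun i => ε i * x ((Equiv.refl (Fin m)) i)) = d := by
        funext i
        rw [hεdef, hddef]
        dsimp only [Equiv.refl_apply]
        by_cases h : x i < 0
        · rw [if_pos h, abs_of_neg h]; ring
        · rw [if_neg h, abs_of_nonneg (not_lt.1 h), one_mul]
      rw [h3] at h2
      exact h2
    have htr : (Xᵀ * Y).trace = ∑ i : Fin m, d i * sval Y i := by
      conv_lhs => rw [hXdef, hY]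
      rw [trace_formula hmn d (sval Y) U U V V, hU'U, hVtV]
      refine Finset.sum_congr rfl fun k _ => ?_
      have hterm : ∀ l : Fin m, d k * sval Y l *
          ((1 : Matrix (Fin m) (Fin m) ℝ) k l *
            (1 : Matrix (Fin n) (Fin n) ℝ) (Fin.castLE hmn l) (Fin.castLE hmn k))
          = if k = l then d k * sval Y k else 0 := by
        intro l
        rcases eq_or_ne k l with rfl | hne
        · simp [Matrix.one_apply]
        · simp [Matrix.one_apply, hne]
      simp_rw [hterm]
      rw [Finset.sum_ite_eq Finset.univ k (fun _ => d k * sval Y k)]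
      simp
    have hle : ∑ i : Fin m, x i * sval Y i ≤ (Xᵀ * Y).trace := by
      rw [htr]
      refine Finset.sum_le_sum fun i _ => ?_
      exact mul_le_mul_of_nonneg_right (le_abs_self _) (sval_nonneg Y i)
    refine le_trans ?_
      (le_iSup (fun X : Matrix (Fin m) (Fin n) ℝ =>
        (((Xᵀ * Y).trace : ℝ) : EReal) - F (sval X)) X)
    rw [hFX]
    exact EReal.sub_le_sub (EReal.coe_le_coe_iff.2 hle) le_rfl
end
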